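/- arXiv:2504.06674 — 9 statements merged into one kernel-verified Lean document; each statement's English description precedes it below -/
import Mathlib

section
/- For any quaternion matrix A, the row left rank of A (the maximum number of rows that are linearly independent over left scalar multiplication by quaternions) equals the column right rank of A (the maximum number of columns that are linearly independent over right scalar multiplication). -/
/-- The row left rank of a quaternion matrix: the rank (dimension of the span, with
quaternion scalars acting on the left) of the set of rows of `A`. -/
noncomputable def rowLeftRank {m n : Type*} (A : Matrix m n (Quaternion ℝ)) : ℕ :=
  (Module.rank (Quaternion ℝ)
    (Submodule.span (Quaternion ℝ) (Set.range (fun i j => A i j)))).toNat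

/-- The row right rank: scalars act on the right, i.e. over the opposite ring. -/
noncomputable def rowRightRank {m n : Type*} (A : Matrix m n (Quaternion ℝ)) : ℕ :=
  (Module.rank (Quaternion ℝ)ᵐᵒᵖ
    (Submodule.span (Quaternion ℝ)ᵐᵒᵖ (Set.range (fun i j => A i j)))).toNat

/-- The column right rank: the span of the columns with scalars acting on the right. -/
noncomputable def colRightRank {m n : Type*} (A : Matrix m n (Quaternion ℝ)) : ℕ :=
  (Module.rank (Quaternion ℝ)ᵐᵒᵖ
    (Submodule.span (Quaternion ℝ)ᵐᵒᵖ (Set.range (fun j i => A i j)))).toNat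

/-- A quaternion unit gain graph on vertex type `V`. -/
structure QuaternionUnitGainGraph (V : Type*) where
  G : SimpleGraph V
  gain : V → V → Quaternion ℝ
  gain_unit : ∀ u v, G.Adj u v → ‖gain u v‖ = 1
  gain_inv : ∀ u v, G.Adj u v → gain v u = star (gain u v)
  gain_zero : ∀ u v, ¬ G.Adj u v → gain u v = 0

/-- The (Hermitian, quaternion) adjacency matrix of a quaternion unit gain graph. -/
def QuaternionUnitGainGraph.adjMatrix {V : Type*} (Φ : QuaternionUnitGainGraph V) :
    Matrix V V (Quaternion ℝ) := fun u v => Φ.gain u v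

/-- The row left rank of a quaternion unit gain graph. -/
noncomputable def QuaternionUnitGainGraph.rank {V : Type*} (Φ : QuaternionUnitGainGraph V) : ℕ :=
  rowLeftRank Φ.adjMatrix

section RankLemmas

open Submodule Set MulOpposite Cardinal

/-- Over a division ring, the column right rank is at most the row left rank. -/
lemma colRank_le_rowRank_general {K : Type*} [DivisionRing K] {m n : Type*} [Fintype m]
    (A : Matrix m n K) :
    (Module.rank Kᵐᵒᵖ (span Kᵐᵒᵖ (Set.range (fun j i => A i j)))).toNat ≤
      (Module.rank K (span K (Set.range (fun i j => A i j)))).toNat := by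
  classical
  obtain ⟨t, hts, hspan, hli⟩ := exists_linearIndependent K (Set.range (fun i j => A i j))
  have htfin : t.Finite := (Set.finite_range _).subset hts
  set T : Finset (n → K) := htfin.toFinset with hT
  have hrow : ∀ i, (fun j => A i j) ∈ span K t := by
    intro i
    rw [hspan]; exact subset_span ⟨i, rfl⟩
  choose c hc1 hc2 using fun i => Submodule.mem_span_set.mp (hrow i)
  have hA : ∀ i j, A i j = ∑ w ∈ T, c i w * w j := by
    intro i j
    have h1 : (fun j => A i j) = ∑ w ∈ T, c i w • w := by
      rw [← hc2 i, Finsupp.sum]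
      exact Finset.sum_subset (fun w hw => htfin.mem_toFinset.mpr (hc1 i hw))
        (fun w _ hw => by rw [Finsupp.notMem_support_iff.mp hw, zero_smul])
    have := congrFun h1 j
    simpa [Finset.sum_apply] using this
  set g : T → (m → K) := fun w i => c i w.1 with hg
  have hcol : ∀ j, (fun i => A i j) ∈ span Kᵐᵒᵖ (Set.range g) := by
    intro j
    have heq : (fun i => A i j) = ∑ w ∈ T.attach, op (w.1 j) • g w := by
      funext i
      rw [Finset.sum_apply]
      simp only [op_smul_eq_mul, hg]
      rw [hA i j, ← Finset.sum_attach T (fun w => c i w * w j)]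
      exact Finset.sum_congr rfl fun x _ => rfl
    rw [heq]
    exact Submodule.sum_mem _ fun w _ => Submodule.smul_mem _ _ (subset_span ⟨w, rfl⟩)
  have h1 : span Kᵐᵒᵖ (Set.range (fun j i => A i j)) ≤ span Kᵐᵒᵖ (Set.range g) :=
    span_le.mpr (by rintro _ ⟨j, rfl⟩; exact hcol j)
  have h2 : (Module.rank Kᵐᵒᵖ (span Kᵐᵒᵖ (Set.range (fun j i => A i j)))).toNat ≤ T.card := by
    have e0 : Module.rank Kᵐᵒᵖ (span Kᵐᵒᵖ (Set.range (fun j i => A i j))) ≤ #(Set.range g) :=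
      (Submodule.rank_mono h1).trans (rank_span_le _)
    have e1 := Cardinal.toNat_le_toNat e0 ((Set.finite_range g).lt_aleph0)
    have e3 : Nat.card (Set.range g) ≤ Nat.card {x // x ∈ T} := Finite.card_range_le g
    have e4 : Nat.card {x // x ∈ T} = T.card := by simp
    have e2 : (#(Set.range g)).toNat = Nat.card (Set.range g) := rfl
    omega
  have h3 : (Module.rank K (span K (Set.range (fun i j => A i j)))).toNat = T.card := by
    rw [← hspan, rank_span_set hli]
    have e5 : Cardinal.toNat #↑t = Nat.card ↥t := rfl
    rw [e5, Nat.card_coe_set_eq, Set.ncard_eq_toFinset_card t htfin]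
  omega

/-- Over a division ring, the row left rank is at most the column right rank. -/
lemma rowRank_le_colRank_general {K : Type*} [DivisionRing K] {m n : Type*} [Fintype n]
    (A : Matrix m n K) :
    (Module.rank K (span K (Set.range (fun i j => A i j)))).toNat ≤
      (Module.rank Kᵐᵒᵖ (span Kᵐᵒᵖ (Set.range (fun j i => A i j)))).toNat := by
  classical
  obtain ⟨t, hts, hspan, hli⟩ := exists_linearIndependent Kᵐᵒᵖ (Set.range (fun j i => A i j))
  have htfin : t.Finite := (Set.finite_range _).subset hts
  set T : Finset (m → K) := htfin.toFinset with hT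
  have hcolm : ∀ j, (fun i => A i j) ∈ span Kᵐᵒᵖ t := by
    intro j
    rw [hspan]; exact subset_span ⟨j, rfl⟩
  choose c hc1 hc2 using fun j => Submodule.mem_span_set.mp (hcolm j)
  have hA : ∀ i j, A i j = ∑ w ∈ T, w i * unop (c j w) := by
    intro i j
    have h1 : ((c j).sum fun mi r => r • mi) = ∑ w ∈ T, c j w • w := by
      rw [Finsupp.sum]
      exact Finset.sum_subset (fun w hw => htfin.mem_toFinset.mpr (hc1 j hw))
        (fun w _ hw => by rw [Finsupp.notMem_support_iff.mp hw, zero_smul])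
    have := congrFun ((hc2 j).symm.trans h1) i
    simpa [Finset.sum_apply] using this
  set g : T → (n → K) := fun w j => unop (c j w.1) with hg
  have hrow : ∀ i, (fun j => A i j) ∈ span K (Set.range g) := by
    intro i
    have heq : (fun j => A i j) = ∑ w ∈ T.attach, (w.1 i) • g w := by
      funext j
      rw [Finset.sum_apply]
      rw [hA i j, ← Finset.sum_attach T (fun w => w i * unop (c j w))]
      exact Finset.sum_congr rfl fun x _ => rfl
    rw [heq]
    exact Submodule.sum_mem _ fun w _ => Submodule.smul_mem _ _ (subset_span ⟨w, rfl⟩)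
  have h1 : span K (Set.range (fun i j => A i j)) ≤ span K (Set.range g) :=
    span_le.mpr (by rintro _ ⟨i, rfl⟩; exact hrow i)
  have h2 : (Module.rank K (span K (Set.range (fun i j => A i j)))).toNat ≤ T.card := by
    have e0 : Module.rank K (span K (Set.range (fun i j => A i j))) ≤ #(Set.range g) :=
      (Submodule.rank_mono h1).trans (rank_span_le _)
    have e1 := Cardinal.toNat_le_toNat e0 ((Set.finite_range g).lt_aleph0)
    have e3 : Nat.card (Set.range g) ≤ Nat.card {x // x ∈ T} := Finite.card_range_le g
    have e4 : Nat.card {x // x ∈ T} = T.card := by simp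
    have e2 : (#(Set.range g)).toNat = Nat.card (Set.range g) := rfl
    omega
  have h3 : (Module.rank Kᵐᵒᵖ (span Kᵐᵒᵖ (Set.range (fun j i => A i j)))).toNat = T.card := by
    rw [← hspan, rank_span_set hli]
    have e5 : Cardinal.toNat #↑t = Nat.card ↥t := rfl
    rw [e5, Nat.card_coe_set_eq, Set.ncard_eq_toFinset_card t htfin]
  omega


end RankLemmas

/-- The row left rank of a quaternion matrix equals its column right rank. -/
theorem rowLeftRank_eq_colRightRank {m n : Type*} [Fintype m] [Fintype n]
    (A : Matrix m n (Quaternion ℝ)) :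
    rowLeftRank A = colRightRank A := by
  exact le_antisymm (rowRank_le_colRank_general A) (colRank_le_rowRank_general A)
end

section
/- The 2×2 quaternion matrix A with entries A₁₁ = 1 - j·i, A₁₂ = j + i, A₂₁ = -i, A₂₂ = 1 has row left rank equal to 1 but row right rank equal to 2; in particular, the row left rank and row right rank of a quaternion matrix need not coincide. -/
/-- The quaternion `i`. -/
def qI : Quaternion ℝ := ⟨0, 1, 0, 0⟩
/-- The quaternion `j`. -/
def qJ : Quaternion ℝ := ⟨0, 0, 1, 0⟩

/-! Write the matrix as `!![a, b; c, 1]`. Eliminating with the entry `1`, its rows are dependent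
under left scalars iff `a = b * c`, and under right scalars iff `a = c * b`. Here
`a = 1 - j i = (j + i)(-i) = b c`, whereas `c b = 1 - i j ≠ a` because `i j ≠ j i`. -/

open Module Submodule Quaternion

section DivisionRing

variable {D : Type*} [DivisionRing D]

theorem finrank_span_range_fin_two_of_eq_smul {V : Type*} [AddCommGroup V] [Module D V]
    {v : Fin 2 → V} {r : D} (h0 : v 0 = r • v 1) (h1 : v 1 ≠ 0) :
    finrank D (span D (Set.range v)) = 1 := by
  have hrange : Set.range v = insert (v 0) {v 1} := by
    ext; simp [Fin.exists_fin_two, eq_comm]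
  rw [hrange, span_insert_eq_span (h0 ▸ smul_mem _ r (mem_span_singleton_self _))]
  exact finrank_span_singleton h1

theorem linearIndependent_mulOpposite_rows_of_ne_mul {a b c : D} (h : a ≠ c * b) :
    LinearIndependent Dᵐᵒᵖ ![![a, b], ![c, 1]] := by
  refine LinearIndependent.pair_iff.2 fun s t hst => ?_
  have h0 : a * s.unop + c * t.unop = 0 := by simpa using congrFun hst 0
  have h1 : b * s.unop + t.unop = 0 := by simpa using congrFun hst 1
  have ht : t.unop = -(b * s.unop) := eq_neg_of_add_eq_zero_right h1
  have hs : s.unop = 0 := by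
    rw [ht, mul_neg, ← mul_assoc, ← sub_eq_add_neg, ← sub_mul] at h0
    exact (mul_eq_zero.1 h0).resolve_left (sub_ne_zero.2 h)
  rw [hs, mul_zero, neg_zero] at ht
  exact ⟨MulOpposite.unop_injective hs, MulOpposite.unop_injective ht⟩

end DivisionRing

theorem rowLeftRank_eq_one_of_eq_mul {a b c : ℍ[ℝ]} (h : a = b * c) :
    rowLeftRank !![a, b; c, 1] = 1 :=
  finrank_span_range_fin_two_of_eq_smul (r := b) (by funext j; fin_cases j <;> simp [h])
    fun h1 => one_ne_zero (congrFun h1 1)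

theorem rowRightRank_eq_two_of_ne_mul {a b c : ℍ[ℝ]} (h : a ≠ c * b) :
    rowRightRank !![a, b; c, 1] = 2 :=
  finrank_span_eq_card (linearIndependent_mulOpposite_rows_of_ne_mul h)

/-- The explicit 2×2 quaternion matrix whose row left rank is 1 but whose
row right rank is 2: the two ranks of a quaternion matrix need not coincide. -/
theorem rowLeftRank_ne_rowRightRank_example :
    rowLeftRank !![1 - qJ * qI, qJ + qI; -qI, 1] = 1 ∧
    rowRightRank !![1 - qJ * qI, qJ + qI; -qI, 1] = 2 := by
  have hii : qI * qI = -1 := by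
    ext <;> simp only [Quaternion.re_mul, Quaternion.imI_mul, Quaternion.imJ_mul,
      Quaternion.imK_mul] <;> simp [qI]
  have hij : qI * qJ ≠ qJ * qI := by
    intro h
    have hk := congrArg QuaternionAlgebra.imK h
    simp only [Quaternion.imK_mul] at hk
    norm_num [qI, qJ] at hk
  refine ⟨rowLeftRank_eq_one_of_eq_mul ?_, rowRightRank_eq_two_of_ne_mul ?_⟩
  · rw [mul_neg, add_mul, hii]
    noncomm_ring
  · intro h
    rw [neg_mul, mul_add, hii] at h
    exact hij (by simpa [sub_eq_add_neg, add_comm] using h.symm)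
end

section
/- Let T be a tree on n vertices with matching number m and let r be the rank of its adjacency matrix over the reals. Then r = 2m. -/
/-!
A forest with at least one edge has a leaf `u`; let `v` be its neighbour, and delete every edge at
`v`. The matching number drops by exactly one: a matching meets `v` in at most one edge, and the
edge `uv` can be added to any matching of the smaller graph. The rank of the adjacency matrix `A`
drops by exactly two: row and column `u` of `A` are the unit vector `e_v`, so zeroing row and
column `v` turns the kernel `ker A` into `ker A ⊕ span {e_u, e_v}`. Induction on the forest gives
`rank A = 2 m`.
-/

/-- The matching number of a simple graph: the maximum number of pairwise
non-adjacent edges. -/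
noncomputable def matchingNumber {V : Type*} [Fintype V] (G : SimpleGraph V) : ℕ :=
  sSup {k | ∃ M : G.Subgraph, M.IsMatching ∧ M.edgeSet.ncard = k}

namespace Matrix

section Semiring

variable {m n α : Type*} [Fintype n] [DecidableEq n] [NonUnitalNonAssocSemiring α]

theorem updateCol_zero_mulVec (A : Matrix m n α) (j : n) (x : n → α) :
    A.updateCol j 0 *ᵥ x = A *ᵥ Function.update x j 0 := by
  ext i
  simp only [mulVec, dotProduct, updateCol_apply, Function.update_apply]
  congr 1 with k
  split_ifs <;> simp

theorem updateCol_updateRow_zero_mulVec (A : Matrix n n α) (j : n) (x : n → α) :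
    (A.updateRow j 0).updateCol j 0 *ᵥ x =
      Function.update (A *ᵥ Function.update x j 0) j 0 := by
  rw [updateCol_zero_mulVec, updateRow_mulVec, zero_dotProduct]

end Semiring

section Kernel

variable {n R : Type*} [Fintype n] [DecidableEq n] [CommRing R] {A : Matrix n n R} {u v : n}

theorem ker_mulVecLin_le_ker_updateCol_updateRow (hrow : A u = Pi.single v 1) :
    LinearMap.ker A.mulVecLin ≤ LinearMap.ker ((A.updateRow v 0).updateCol v 0).mulVecLin := by
  intro x hx
  rw [LinearMap.mem_ker, mulVecLin_apply] at hx ⊢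
  have hxv : x v = 0 := by
    simpa [mulVec, hrow, single_one_dotProduct] using congrFun hx u
  rw [updateCol_updateRow_zero_mulVec, ← hxv, Function.update_eq_self, hx, hxv]
  simp

theorem single_mem_ker_updateCol_updateRow (huv : u ≠ v) (hcol : A.col u = Pi.single v 1) :
    Pi.single u 1 ∈ LinearMap.ker ((A.updateRow v 0).updateCol v 0).mulVecLin := by
  rw [LinearMap.mem_ker, mulVecLin_apply, updateCol_updateRow_zero_mulVec,
    Function.update_eq_self_iff.mpr (Pi.single_eq_of_ne huv.symm _).symm, mulVec_single_one,
    hcol]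
  simp [Pi.single, Function.update_idem]

theorem single_self_mem_ker_updateCol_updateRow :
    Pi.single v 1 ∈ LinearMap.ker ((A.updateRow v 0).updateCol v 0).mulVecLin := by
  rw [LinearMap.mem_ker, mulVecLin_apply, updateCol_updateRow_zero_mulVec]
  simp [Pi.single, Function.update_idem]

theorem mem_ker_updateCol_updateRow_iff (huv : u ≠ v) (hrow : A u = Pi.single v 1)
    (hcol : A.col u = Pi.single v 1) {x : n → R} :
    x ∈ LinearMap.ker ((A.updateRow v 0).updateCol v 0).mulVecLin ↔
      ∃ z ∈ LinearMap.ker A.mulVecLin, ∃ a b : R,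
        z + a • Pi.single u 1 + b • Pi.single v 1 = x := by
  constructor
  · intro hx
    rw [LinearMap.mem_ker, mulVecLin_apply, updateCol_updateRow_zero_mulVec] at hx
    set y := Function.update x v 0
    set c := (A *ᵥ y) v
    -- `A y` vanishes off `v`, and column `u` of `A` is `e_v`, so `y - c e_u` lies in `ker A`.
    have hy : A *ᵥ y = c • Pi.single v 1 := by
      ext i
      by_cases hi : i = v
      · subst hi; simp [c]
      · simpa [hi] using congrFun hx i
    refine ⟨y - c • Pi.single u 1, by simp [mulVec_sub, mulVec_smul, hy, hcol], c, x v, ?_⟩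
    rw [sub_add_cancel]
    ext i
    by_cases hi : i = v
    · subst hi; simp [y]
    · simp [y, hi]
  · rintro ⟨z, hz, a, b, rfl⟩
    exact add_mem (add_mem (ker_mulVecLin_le_ker_updateCol_updateRow hrow hz)
      (Submodule.smul_mem _ a (single_mem_ker_updateCol_updateRow huv hcol)))
      (Submodule.smul_mem _ b single_self_mem_ker_updateCol_updateRow)

end Kernel

variable {n K : Type*} [Fintype n] [DecidableEq n] [Field K] {A : Matrix n n K} {u v : n}

theorem finrank_ker_updateCol_updateRow (huv : u ≠ v) (hrow : A u = Pi.single v 1)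
    (hcol : A.col u = Pi.single v 1) :
    Module.finrank K (LinearMap.ker ((A.updateRow v 0).updateCol v 0).mulVecLin) =
      Module.finrank K (LinearMap.ker A.mulVecLin) + 2 := by
  let Φ : LinearMap.ker A.mulVecLin × K × K →ₗ[K] n → K :=
    (LinearMap.ker A.mulVecLin).subtype.coprod
      ((LinearMap.toSpanSingleton K _ (Pi.single u 1)).coprod
        (LinearMap.toSpanSingleton K _ (Pi.single v 1)))
  have hΦ (z : LinearMap.ker A.mulVecLin) (a b : K) :
      Φ (z, a, b) = (z : n → K) + a • Pi.single u 1 + b • Pi.single v 1 := by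
    simp [Φ, add_assoc]
  have hinj : Function.Injective Φ := by
    rw [← LinearMap.ker_eq_bot, LinearMap.ker_eq_bot']
    rintro ⟨⟨z, hz⟩, a, b⟩ h0
    rw [hΦ] at h0
    rw [LinearMap.mem_ker, mulVecLin_apply] at hz
    have hA := congrArg (A *ᵥ ·) h0
    simp only [mulVec_add, mulVec_smul, mulVec_single_one, hcol, hz, mulVec_zero] at hA
    have hb : b = 0 := by simpa [hrow, huv.symm] using congrFun hA u
    have ha : a = 0 := by simpa [hb] using congrFun hA v
    subst ha hb
    simp_all
  have hrange : LinearMap.range Φ = LinearMap.ker ((A.updateRow v 0).updateCol v 0).mulVecLin := by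
    ext x
    rw [LinearMap.mem_range, mem_ker_updateCol_updateRow_iff huv hrow hcol]
    constructor
    · rintro ⟨⟨z, a, b⟩, rfl⟩
      exact ⟨z, z.2, a, b, (hΦ z a b).symm⟩
    · rintro ⟨z, hz, a, b, rfl⟩
      exact ⟨(⟨z, hz⟩, a, b), hΦ _ a b⟩
  rw [← hrange, LinearMap.finrank_range_of_inj hinj]
  simp

theorem rank_eq_rank_updateCol_updateRow_add_two (huv : u ≠ v) (hrow : A u = Pi.single v 1)
    (hcol : A.col u = Pi.single v 1) :
    A.rank = ((A.updateRow v 0).updateCol v 0).rank + 2 := by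
  have hA := A.mulVecLin.finrank_range_add_finrank_ker
  have hB := ((A.updateRow v 0).updateCol v 0).mulVecLin.finrank_range_add_finrank_ker
  rw [finrank_ker_updateCol_updateRow huv hrow hcol] at hB
  unfold rank
  omega

end Matrix

namespace SimpleGraph

variable {V : Type*} {G : SimpleGraph V}

namespace Subgraph

def restrictEdges (M : G.Subgraph) (H : SimpleGraph V) : H.Subgraph where
  verts := {a | ∃ b, M.Adj a b ∧ H.Adj a b}
  Adj a b := M.Adj a b ∧ H.Adj a b
  adj_sub h := h.2
  edge_vert h := ⟨_, h⟩
  symm := ⟨fun _ _ h => ⟨h.1.symm, h.2.symm⟩⟩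

theorem edgeSet_restrictEdges (M : G.Subgraph) (H : SimpleGraph V) :
    (M.restrictEdges H).edgeSet = M.edgeSet ∩ H.edgeSet := by
  ext e
  induction e
  simp [restrictEdges]

theorem IsMatching.restrictEdges {M : G.Subgraph} (hM : M.IsMatching) (H : SimpleGraph V) :
    (M.restrictEdges H).IsMatching := by
  rintro a ⟨b, hab⟩
  exact ⟨b, hab, fun c hac => hM.eq_of_adj_left hac.1 hab.1⟩

theorem IsMatching.subsingleton_edgeSet_inter_incidenceSet {M : G.Subgraph} (hM : M.IsMatching)
    (v : V) : (M.edgeSet ∩ G.incidenceSet v).Subsingleton := by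
  rintro e ⟨he, -, hve⟩ e' ⟨he', -, hve'⟩
  obtain ⟨w, rfl⟩ := Sym2.mem_iff_exists.mp hve
  obtain ⟨w', rfl⟩ := Sym2.mem_iff_exists.mp hve'
  rw [hM.eq_of_adj_left (M.mem_edgeSet.mp he) (M.mem_edgeSet.mp he')]

end Subgraph

theorem IsAcyclic.exists_existsUnique_adj [Finite V] (hG : G.IsAcyclic) (hne : G ≠ ⊥) :
    ∃ u, ∃! v, G.Adj u v := by
  obtain ⟨x, y, hxy⟩ := ne_bot_iff_exists_adj.mp hne
  have : Nonempty V := ⟨x⟩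
  -- a longest path starts at a leaf
  obtain ⟨a, b, p, hp, hmax⟩ := Walk.exists_isPath_forall_isPath_length_le_length G
  have hnil : ¬p.Nil := by
    rw [Walk.not_nil_iff_lt_length]
    simpa [hxy.length_toWalk, Nat.one_le_iff_ne_zero, Nat.pos_iff_ne_zero]
      using hmax x y hxy.toWalk hxy.isPath_toWalk
  refine ⟨a, p.snd, p.adj_snd hnil, fun w hw => hG.eq_snd_of_adj_start hp hw ?_⟩
  by_contra hws
  have := hmax w b (p.cons hw.symm) (hp.cons hws)
  simp at this

section Matching

variable [Fintype V]

private theorem bddAbove_matching_ncards (G : SimpleGraph V) :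
    BddAbove {k | ∃ M : G.Subgraph, M.IsMatching ∧ M.edgeSet.ncard = k} := by
  refine ⟨G.edgeSet.ncard, ?_⟩
  rintro k ⟨M, -, rfl⟩
  exact Set.ncard_le_ncard M.edgeSet_subset

theorem exists_isMatching_ncard_edgeSet_eq_matchingNumber (G : SimpleGraph V) :
    ∃ M : G.Subgraph, M.IsMatching ∧ M.edgeSet.ncard = matchingNumber G := by
  refine Nat.sSup_mem ?_ (bddAbove_matching_ncards G)
  exact ⟨0, ⊥, by simp [Subgraph.IsMatching], by simp⟩

theorem Subgraph.IsMatching.ncard_edgeSet_le_matchingNumber {M : G.Subgraph}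
    (hM : M.IsMatching) : M.edgeSet.ncard ≤ matchingNumber G :=
  le_csSup (bddAbove_matching_ncards G) ⟨M, hM, rfl⟩

theorem matchingNumber_bot : matchingNumber (⊥ : SimpleGraph V) = 0 := by
  obtain ⟨M, -, hM⟩ := exists_isMatching_ncard_edgeSet_eq_matchingNumber (⊥ : SimpleGraph V)
  rw [← hM, Set.ncard_eq_zero]
  exact Set.subset_empty_iff.mp (edgeSet_bot (V := V) ▸ M.edgeSet_subset)

theorem matchingNumber_le_matchingNumber_deleteIncidenceSet_add_one (G : SimpleGraph V) (v : V) :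
    matchingNumber G ≤ matchingNumber (G.deleteIncidenceSet v) + 1 := by
  obtain ⟨M, hM, hMcard⟩ := exists_isMatching_ncard_edgeSet_eq_matchingNumber G
  have hsplit : M.edgeSet ⊆
      (M.restrictEdges (G.deleteIncidenceSet v)).edgeSet ∪ (M.edgeSet ∩ G.incidenceSet v) := by
    intro e he
    rw [Subgraph.edgeSet_restrictEdges, edgeSet_deleteIncidenceSet]
    by_cases hv : e ∈ G.incidenceSet v
    · exact Or.inr ⟨he, hv⟩
    · exact Or.inl ⟨he, M.edgeSet_subset he, hv⟩
  calc matchingNumber G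
      ≤ (M.restrictEdges (G.deleteIncidenceSet v)).edgeSet.ncard +
          (M.edgeSet ∩ G.incidenceSet v).ncard :=
        hMcard ▸ (Set.ncard_le_ncard hsplit).trans (Set.ncard_union_le _ _)
    _ ≤ matchingNumber (G.deleteIncidenceSet v) + 1 := add_le_add
        (hM.restrictEdges _).ncard_edgeSet_le_matchingNumber
        (Set.ncard_le_one_iff_subsingleton.mpr (hM.subsingleton_edgeSet_inter_incidenceSet v))

theorem matchingNumber_deleteIncidenceSet_add_one_le {u v : V} (huv : G.Adj u v)
    (hu : ∀ w, G.Adj u w → w = v) :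
    matchingNumber (G.deleteIncidenceSet v) + 1 ≤ matchingNumber G := by
  obtain ⟨N, hN, hNcard⟩ :=
    exists_isMatching_ncard_edgeSet_eq_matchingNumber (G.deleteIncidenceSet v)
  set N' := N.restrictEdges G
  have hN' : N'.edgeSet = N.edgeSet := by
    rw [Subgraph.edgeSet_restrictEdges, Set.inter_eq_left]
    exact N.edgeSet_subset.trans (edgeSet_mono (deleteIncidenceSet_le G v))
  have hdisj : Disjoint N'.support (G.subgraphOfAdj huv).support := by
    rw [support_subgraphOfAdj, Set.disjoint_right]
    rintro a ha ⟨b, hab, -⟩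
    replace hab := deleteIncidenceSet_adj.mp (N.adj_sub hab)
    obtain rfl | rfl := ha
    · exact hab.2.2 (hu b hab.1)
    · exact hab.2.1 rfl
  have huv_notMem : s(u, v) ∉ N'.edgeSet := by
    rw [hN']
    intro h
    exact (deleteIncidenceSet_adj.mp (N.edgeSet_subset h)).2.2 rfl
  have hcard : (N' ⊔ G.subgraphOfAdj huv).edgeSet.ncard =
      matchingNumber (G.deleteIncidenceSet v) + 1 := by
    rw [Subgraph.edgeSet_sup, edgeSet_subgraphOfAdj, Set.union_singleton,
      Set.ncard_insert_of_notMem huv_notMem, hN', hNcard]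
  exact hcard ▸
    ((hN.restrictEdges G).sup (.subgraphOfAdj huv) hdisj).ncard_edgeSet_le_matchingNumber

theorem matchingNumber_eq_matchingNumber_deleteIncidenceSet_add_one {u v : V} (huv : G.Adj u v)
    (hu : ∀ w, G.Adj u w → w = v) :
    matchingNumber G = matchingNumber (G.deleteIncidenceSet v) + 1 :=
  (matchingNumber_le_matchingNumber_deleteIncidenceSet_add_one G v).antisymm
    (matchingNumber_deleteIncidenceSet_add_one_le huv hu)

end Matching

theorem adjMatrix_deleteIncidenceSet {α : Type*} [Zero α] [One α] [DecidableEq V]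
    [DecidableRel G.Adj] (v : V) :
    (G.deleteIncidenceSet v).adjMatrix α = ((G.adjMatrix α).updateRow v 0).updateCol v 0 := by
  ext a b
  simp only [adjMatrix_apply, deleteIncidenceSet_adj, Matrix.updateCol_apply,
    Matrix.updateRow_apply]
  split_ifs <;> simp_all

variable [Fintype V] {K : Type*} [Field K]

theorem rank_adjMatrix_eq_rank_adjMatrix_deleteIncidenceSet_add_two [DecidableEq V]
    [DecidableRel G.Adj] {u v : V} (huv : G.Adj u v) (hu : ∀ w, G.Adj u w → w = v) :
    (G.adjMatrix K).rank = ((G.deleteIncidenceSet v).adjMatrix K).rank + 2 := by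
  have hrow : G.adjMatrix K u = Pi.single v 1 := by
    ext w
    rw [adjMatrix_apply, Pi.single_apply]
    by_cases hw : w = v
    · simp [hw, huv]
    · simp [hw, mt (hu w) hw]
  rw [adjMatrix_deleteIncidenceSet]
  refine Matrix.rank_eq_rank_updateCol_updateRow_add_two huv.ne hrow ?_
  rw [Matrix.col, transpose_adjMatrix, hrow]

theorem IsAcyclic.rank_adjMatrix_eq_two_mul_matchingNumber [DecidableRel G.Adj]
    (hG : G.IsAcyclic) : (G.adjMatrix K).rank = 2 * matchingNumber G := by
  classical
  revert ‹DecidableRel G.Adj›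
  induction G using WellFoundedLT.induction with
  | _ G ih =>
  by_cases hbot : G = ⊥
  · subst hbot
    have hzero : (⊥ : SimpleGraph V).adjMatrix K = 0 := by
      ext
      simp [adjMatrix_apply]
    rw [hzero, Matrix.rank_zero, matchingNumber_bot]
  obtain ⟨u, v, huv, hu⟩ := hG.exists_existsUnique_adj hbot
  have hlt : G.deleteIncidenceSet v < G := by
    refine lt_of_le_of_ne (deleteIncidenceSet_le G v) fun h => ?_
    exact (deleteIncidenceSet_adj.mp (h ▸ huv.symm)).2.1 rfl
  rw [rank_adjMatrix_eq_rank_adjMatrix_deleteIncidenceSet_add_two huv hu,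
    matchingNumber_eq_matchingNumber_deleteIncidenceSet_add_one huv hu,
    ih _ hlt (hG.anti hlt.le)]
  ring

end SimpleGraph

theorem tree_rank_eq_two_mul_matchingNumber_general {V : Type*} [Fintype V]
    (G : SimpleGraph V) [DecidableRel G.Adj] (hT : G.IsTree) :
    (G.adjMatrix ℝ).rank = 2 * matchingNumber G :=
  hT.isAcyclic.rank_adjMatrix_eq_two_mul_matchingNumber

/-- For a tree, the rank of the adjacency matrix over the reals equals
twice the matching number. -/
theorem tree_rank_eq_two_mul_matchingNumber {V : Type*} [Fintype V] [DecidableEq V]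
    (G : SimpleGraph V) [DecidableRel G.Adj] (hT : G.IsTree) :
    (G.adjMatrix ℝ).rank = 2 * matchingNumber G :=
  tree_rank_eq_two_mul_matchingNumber_general G hT
end

section
/- Let Φ be a quaternion unit gain graph whose underlying graph is a tree T. Then the row left rank of the adjacency matrix A(Φ) equals the rank of the adjacency matrix A(T) of the underlying tree. -/
/-!
On a tree every gain function is switching equivalent to the trivial one: if `ζ v` is the gain
of the unique path from a fixed root to `v`, then `φ(u, v) = (ζ u)⁻¹ * ζ v` on every edge.
Hence `A(Φ) = diag(ζ)⁻¹ * A(T) * diag(ζ)`, and scaling rows on the left and columns on the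
right by nonzero quaternions does not change the row left rank. Finally, real vectors have
the same rank over `ℍ` as over `ℝ`: expanding an `ℍ`-linear relation in a real basis of `ℍ`
gives real linear relations.
-/

open Submodule Set Module
open scoped Quaternion

namespace SimpleGraph

variable {V α : Type*} {G : SimpleGraph V}

def Walk.gainProd [Monoid α] (φ : V → V → α) {u v : V} (p : G.Walk u v) : α :=
  (p.darts.map fun d => φ d.fst d.snd).prod

lemma Walk.gainProd_concat [Monoid α] (φ : V → V → α) {u v w : V} (p : G.Walk u v)
    (h : G.Adj v w) : (p.concat h).gainProd φ = p.gainProd φ * φ v w := by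
  simp [gainProd, darts_concat]

lemma Walk.gainProd_ne_zero [GroupWithZero α] {φ : V → V → α}
    (hφ : ∀ u v, G.Adj u v → φ u v ≠ 0) {u v : V} (p : G.Walk u v) : p.gainProd φ ≠ 0 :=
  List.prod_ne_zero (by simpa using fun d _ => hφ _ _ d.adj)

lemma IsAcyclic.concat_eq_or_concat_eq [DecidableEq V] (hG : G.IsAcyclic) {r u v : V}
    {p : G.Walk r u} {q : G.Walk r v} (hp : p.IsPath) (hq : q.IsPath) (h : G.Adj u v) :
    p.concat h = q ∨ q.concat h.symm = p := by
  have unique {w : V} {p₁ p₂ : G.Walk r w} (h₁ : p₁.IsPath) (h₂ : p₂.IsPath) : p₁ = p₂ :=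
    congrArg Subtype.val ((hG.subsingleton_path r w).elim ⟨p₁, h₁⟩ ⟨p₂, h₂⟩)
  by_cases hv : v ∈ p.support
  · have hpv : p.takeUntil v hv = q := unique (hp.takeUntil hv) hq
    have hu : u ∉ q.support := hpv ▸ Walk.endpoint_notMem_support_takeUntil hp hv h.ne
    exact .inr (unique (hq.concat hu h.symm) hp)
  · exact .inl (unique (hp.concat hv h) hq)

lemma IsTree.exists_gain_eq_inv_mul [GroupWithZero α] (hG : G.IsTree) (φ : V → V → α)
    (hφ : ∀ u v, G.Adj u v → φ u v ≠ 0) (hφ_symm : ∀ u v, G.Adj u v → φ v u = (φ u v)⁻¹) :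
    ∃ ζ : V → α, (∀ v, ζ v ≠ 0) ∧ ∀ u v, G.Adj u v → φ u v = (ζ u)⁻¹ * ζ v := by
  classical
  obtain ⟨r⟩ := hG.connected.nonempty
  choose p hp _ using hG.existsUnique_path r
  refine ⟨fun v => (p v).gainProd φ, fun v => Walk.gainProd_ne_zero hφ _, fun u v h => ?_⟩
  dsimp only
  rcases hG.isAcyclic.concat_eq_or_concat_eq (hp u) (hp v) h with hpv | hpu
  · rw [← hpv, Walk.gainProd_concat, inv_mul_cancel_left₀ (Walk.gainProd_ne_zero hφ _)]
  · rw [← hpu, Walk.gainProd_concat, hφ_symm _ _ h, mul_inv_rev, inv_inv,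
      mul_assoc, inv_mul_cancel₀ (Walk.gainProd_ne_zero hφ _), mul_one]

end SimpleGraph

lemma Quaternion.star_eq_inv_of_norm_eq_one {q : ℍ[ℝ]} (hq : ‖q‖ = 1) : star q = q⁻¹ := by
  rw [Quaternion.inv_def, Quaternion.normSq_eq_norm_mul_self, hq]
  simp

section ExtensionOfScalars

variable {K ι n : Type*} [Field K]

theorem LinearIndependent.algebraMap_comp {D : Type*} [Ring D] [Algebra K D]
    {v : ι → n → K} (hv : LinearIndependent K v) :
    LinearIndependent D (fun i => algebraMap K D ∘ v i) := by
  classical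
  rw [linearIndependent_iff'] at hv ⊢
  intro s g hg i hi
  let b := Module.Free.chooseBasis K D
  refine b.ext_elem fun j => ?_
  have hcoord : ∑ i ∈ s, b.coord j (g i) • v i = 0 := by
    funext x
    have hx := congr_arg (b.coord j) (congr_fun hg x)
    simp only [Finset.sum_apply, Pi.smul_apply, Function.comp_apply, smul_eq_mul,
      ← Algebra.commutes, ← Algebra.smul_def, map_sum, map_smul, Pi.zero_apply, map_zero] at hx
    simpa [mul_comm] using hx
  simpa using hv s _ hcoord i hi

theorem finrank_span_range_algebraMap_comp {D : Type*} [DivisionRing D] [Algebra K D]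
    [Finite ι] (v : ι → n → K) :
    finrank D (span D (range fun i => algebraMap K D ∘ v i)) = finrank K (span K (range v)) := by
  have := Module.Finite.span_of_finite K (finite_range v)
  obtain ⟨f, -, hf_span, hf_li⟩ := exists_fun_fin_finrank_span_eq K (range v)
  let L := (Algebra.linearMap K D).compLeft n
  have hspan_image (s : Set (n → K)) :
      span D (L '' s) = span D (map L (span K s) : Set (n → D)) := by
    rw [← span_image, span_span_of_tower]
  have hv : (range fun i => algebraMap K D ∘ v i) = L '' range v := by
    rw [← range_comp]; rfl
  have hf : (range fun i => algebraMap K D ∘ f i) = L '' range f := by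
    rw [← range_comp]; rfl
  have hspan : span D (range fun i => algebraMap K D ∘ v i) =
      span D (range fun i => algebraMap K D ∘ f i) := by
    rw [hv, hf, hspan_image, hspan_image, hf_span]
  rw [hspan, finrank_span_eq_card hf_li.algebraMap_comp, Fintype.card_fin]

end ExtensionOfScalars

section DiagonalScaling

variable {D : Type*} [Ring D]

theorem Submodule.span_range_smul_of_isUnit {ι M : Type*} [AddCommGroup M] [Module D M]
    {c : ι → D} (hc : ∀ i, IsUnit (c i)) (w : ι → M) :
    span D (range fun i => c i • w i) = span D (range w) := by
  apply le_antisymm <;> rw [span_le] <;> rintro _ ⟨i, rfl⟩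
  · exact smul_mem _ _ (subset_span ⟨i, rfl⟩)
  · exact (smul_mem_iff_of_isUnit _ (hc i)).mp (subset_span ⟨i, rfl⟩)

theorem rank_span_range_mul_mul_of_isUnit {m n : Type*} (A : m → n → D) {a : m → D}
    {b : n → D} (ha : ∀ i, IsUnit (a i)) (hb : ∀ j, IsUnit (b j)) :
    Module.rank D (span D (range fun i j => a i * A i j * b j)) =
      Module.rank D (span D (range A)) := by
  let R : (n → D) →ₗ[D] (n → D) := LinearMap.piMap fun j => LinearMap.toSpanSingleton D D (b j)
  have hR : Function.Injective R := fun x y hxy =>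
    funext fun j => (hb j).mul_left_injective (congr_fun hxy j)
  have hrows : (fun i j => a i * A i j * b j) = fun i => a i • R (A i) := by
    funext i j
    simp [R, mul_assoc]
  rw [hrows, span_range_smul_of_isUnit ha, range_comp' .., span_image]
  exact (equivMapOfInjective R hR _).rank_eq.symm

end DiagonalScaling

theorem gainTree_rank_eq_tree_rank_general {V : Type*} [Fintype V]
    (Φ : QuaternionUnitGainGraph V) [DecidableRel Φ.G.Adj] (hT : Φ.G.IsTree) :
    Φ.rank = (Φ.G.adjMatrix ℝ).rank := by
  have hgain_ne {u v} (h : Φ.G.Adj u v) : Φ.gain u v ≠ 0 :=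
    norm_ne_zero_iff.mp (Φ.gain_unit u v h ▸ one_ne_zero)
  have hgain_symm u v (h : Φ.G.Adj u v) : Φ.gain v u = (Φ.gain u v)⁻¹ :=
    (Φ.gain_inv u v h).trans (Quaternion.star_eq_inv_of_norm_eq_one (Φ.gain_unit u v h))
  obtain ⟨ζ, hζ_ne, hgain⟩ :=
    hT.exists_gain_eq_inv_mul Φ.gain (fun _ _ => hgain_ne) hgain_symm
  have hA : Φ.adjMatrix = fun u v => (ζ u)⁻¹ * algebraMap ℝ ℍ[ℝ] (Φ.G.adjMatrix ℝ u v) * ζ v := by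
    funext u v
    by_cases h : Φ.G.Adj u v
    · simp [QuaternionUnitGainGraph.adjMatrix, h, hgain u v h]
    · simp [QuaternionUnitGainGraph.adjMatrix, h, Φ.gain_zero u v h]
  rw [QuaternionUnitGainGraph.rank, rowLeftRank, hA, rank_span_range_mul_mul_of_isUnit _
    (fun u => (inv_ne_zero (hζ_ne u)).isUnit) (fun v => (hζ_ne v).isUnit)]
  exact (finrank_span_range_algebraMap_comp _).trans (Matrix.rank_eq_finrank_span_row _).symm

/-- For a quaternion unit gain graph whose underlying graph is a tree, the row left
rank of its adjacency matrix equals the rank of the adjacency matrix of the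
underlying tree. -/
theorem gainTree_rank_eq_tree_rank {V : Type*} [Fintype V] [DecidableEq V]
    (Φ : QuaternionUnitGainGraph V) [DecidableRel Φ.G.Adj] (hT : Φ.G.IsTree) :
    Φ.rank = (Φ.G.adjMatrix ℝ).rank :=
  gainTree_rank_eq_tree_rank_general Φ hT
end

section
/- Let Φ be a quaternion unit gain path P_n^φ on n vertices. If n is even then the row left rank of A(Φ) is n, and if n is odd then the row left rank of A(Φ) is n - 1. -/
section Aux

variable {n : ℕ} (Φ : QuaternionUnitGainGraph (Fin n)) (h : Φ.G = SimpleGraph.pathGraph n)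

include h

lemma gp_adj_iff (u v : Fin n) : Φ.G.Adj u v ↔ ((u : ℕ) + 1 = v ∨ (v : ℕ) + 1 = u) := by
  rw [h]; exact SimpleGraph.pathGraph_adj

lemma gp_entry_zero {u v : Fin n} (h1 : (u : ℕ) + 1 ≠ (v : ℕ)) (h2 : (v : ℕ) + 1 ≠ (u : ℕ)) :
    Φ.adjMatrix u v = 0 := by
  apply Φ.gain_zero u v
  rw [gp_adj_iff Φ h]
  push_neg
  exact ⟨h1, h2⟩

lemma gp_entry_ne_zero {u v : Fin n} (hadj : (u : ℕ) + 1 = (v : ℕ) ∨ (v : ℕ) + 1 = (u : ℕ)) :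
    Φ.adjMatrix u v ≠ 0 := by
  have hu := Φ.gain_unit u v (by rw [gp_adj_iff Φ h]; exact hadj)
  intro h0
  rw [show Φ.adjMatrix u v = Φ.gain u v from rfl] at h0
  rw [h0] at hu
  simp at hu

lemma gp_sum_two (g : Fin n → Quaternion ℝ) (m : ℕ) (hm : m + 2 < n) :
    ∑ s, g s * Φ.adjMatrix s ⟨m + 1, by omega⟩ =
      g ⟨m, by omega⟩ * Φ.adjMatrix ⟨m, by omega⟩ ⟨m + 1, by omega⟩ +
      g ⟨m + 2, hm⟩ * Φ.adjMatrix ⟨m + 2, hm⟩ ⟨m + 1, by omega⟩ := by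
  classical
  have hab : (⟨m, by omega⟩ : Fin n) ≠ ⟨m + 2, hm⟩ := by simp [Fin.ext_iff]
  have hsub : ∑ s ∈ ({(⟨m, by omega⟩ : Fin n), ⟨m + 2, hm⟩} : Finset (Fin n)),
        g s * Φ.adjMatrix s ⟨m + 1, by omega⟩ =
      ∑ s, g s * Φ.adjMatrix s ⟨m + 1, by omega⟩ := by
    refine Finset.sum_subset (Finset.subset_univ _) ?_
    intro s _ hs
    simp only [Finset.mem_insert, Finset.mem_singleton] at hs
    push_neg at hs
    have h1 : (s : ℕ) ≠ m := fun hh => hs.1 (Fin.ext hh)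
    have h2 : (s : ℕ) ≠ m + 2 := fun hh => hs.2 (Fin.ext hh)
    rw [gp_entry_zero Φ h (by simp; omega) (by simp; omega), mul_zero]
  rw [← hsub, Finset.sum_pair hab]

lemma gp_sum_left (g : Fin n → Quaternion ℝ) (hn : 1 < n) :
    ∑ s, g s * Φ.adjMatrix s ⟨0, by omega⟩ =
      g ⟨1, hn⟩ * Φ.adjMatrix ⟨1, hn⟩ ⟨0, by omega⟩ := by
  apply Finset.sum_eq_single_of_mem _ (Finset.mem_univ _)
  intro s _ hs
  have h1 : (s : ℕ) ≠ 1 := fun hh => hs (Fin.ext hh)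
  rw [gp_entry_zero Φ h (by simp) (by simp; omega), mul_zero]

lemma gp_sum_right (g : Fin n → Quaternion ℝ) (hn : 1 < n) :
    ∑ s, g s * Φ.adjMatrix s ⟨n - 1, by omega⟩ =
      g ⟨n - 2, by omega⟩ * Φ.adjMatrix ⟨n - 2, by omega⟩ ⟨n - 1, by omega⟩ := by
  apply Finset.sum_eq_single_of_mem _ (Finset.mem_univ _)
  intro s _ hs
  have h1 : (s : ℕ) ≠ n - 2 := fun hh => hs (Fin.ext hh)
  have h2 : (s : ℕ) < n := s.isLt
  rw [gp_entry_zero Φ h (by simp; omega) (by simp; omega), mul_zero]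

lemma gp_step (g : Fin n → Quaternion ℝ) (hg : ∀ j, ∑ s, g s * Φ.adjMatrix s j = 0)
    (m : ℕ) (hm : m + 2 < n) : g ⟨m, by omega⟩ = 0 ↔ g ⟨m + 2, hm⟩ = 0 := by
  have key := hg ⟨m + 1, by omega⟩
  rw [gp_sum_two Φ h g m hm] at key
  have u1 : Φ.adjMatrix ⟨m, by omega⟩ ⟨m + 1, by omega⟩ ≠ 0 :=
    gp_entry_ne_zero Φ h (Or.inl rfl)
  have u2 : Φ.adjMatrix ⟨m + 2, hm⟩ ⟨m + 1, by omega⟩ ≠ 0 :=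
    gp_entry_ne_zero Φ h (Or.inr rfl)
  constructor
  · intro h0
    rw [h0, zero_mul, zero_add] at key
    exact (mul_eq_zero.mp key).resolve_right u2
  · intro h0
    rw [h0, zero_mul, add_zero] at key
    exact (mul_eq_zero.mp key).resolve_right u1

lemma gp_up (g : Fin n → Quaternion ℝ) (hg : ∀ j, ∑ s, g s * Φ.adjMatrix s j = 0) :
    ∀ (k m : ℕ) (hm : m < n) (hmk : m + 2 * k < n),
      g ⟨m, hm⟩ = 0 → g ⟨m + 2 * k, hmk⟩ = 0 := by
  intro k
  induction k with
  | zero =>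
    intro m hm hmk h0
    rw [show (⟨m + 2 * 0, hmk⟩ : Fin n) = ⟨m, hm⟩ from Fin.mk_eq_mk.mpr (by omega)]
    exact h0
  | succ k ih =>
    intro m hm hmk h0
    have h2 : m + 2 < n := by omega
    have hstep := (gp_step Φ h g hg m h2).mp h0
    have := ih (m + 2) h2 (by omega) hstep
    rw [show (⟨m + 2 * (k + 1), hmk⟩ : Fin n) = ⟨m + 2 + 2 * k, by omega⟩ from
      Fin.mk_eq_mk.mpr (by omega)]
    exact this

lemma gp_down (g : Fin n → Quaternion ℝ) (hg : ∀ j, ∑ s, g s * Φ.adjMatrix s j = 0) :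
    ∀ (k m : ℕ) (hm : m < n) (hmk : m + 2 * k < n),
      g ⟨m + 2 * k, hmk⟩ = 0 → g ⟨m, hm⟩ = 0 := by
  intro k
  induction k with
  | zero =>
    intro m hm hmk h0
    rw [show (⟨m, hm⟩ : Fin n) = ⟨m + 2 * 0, hmk⟩ from Fin.mk_eq_mk.mpr (by omega)]
    exact h0
  | succ k ih =>
    intro m hm hmk h0
    have h2 : m + 2 < n := by omega
    apply (gp_step Φ h g hg m h2).mpr
    apply ih (m + 2) h2 (by omega)
    rw [show (⟨m + 2 + 2 * k, by omega⟩ : Fin n) = ⟨m + 2 * (k + 1), hmk⟩ from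
      Fin.mk_eq_mk.mpr (by omega)]
    exact h0

lemma gp_base1 (g : Fin n → Quaternion ℝ) (hg : ∀ j, ∑ s, g s * Φ.adjMatrix s j = 0)
    (hn : 1 < n) : g ⟨1, hn⟩ = 0 := by
  have key := hg ⟨0, by omega⟩
  rw [gp_sum_left Φ h g hn] at key
  exact (mul_eq_zero.mp key).resolve_right (gp_entry_ne_zero Φ h (Or.inr rfl))

lemma gp_base2 (g : Fin n → Quaternion ℝ) (hg : ∀ j, ∑ s, g s * Φ.adjMatrix s j = 0)
    (hn : 1 < n) : g ⟨n - 2, by omega⟩ = 0 := by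
  have key := hg ⟨n - 1, by omega⟩
  rw [gp_sum_right Φ h g hn] at key
  exact (mul_eq_zero.mp key).resolve_right (gp_entry_ne_zero Φ h (Or.inl (by simp; omega)))

lemma gp_indep_even (hn : Even n) (g : Fin n → Quaternion ℝ)
    (hg : ∀ j, ∑ s, g s * Φ.adjMatrix s j = 0) : ∀ s, g s = 0 := by
  intro s
  obtain ⟨m, hmn⟩ := s
  obtain ⟨b, hb⟩ := hn
  have hn2 : 1 < n := by omega
  rcases Nat.even_or_odd m with he | ho
  · obtain ⟨a, ha⟩ := he
    have hk : n - 2 = m + 2 * (b - 1 - a) := by omega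
    apply gp_down Φ h g hg (b - 1 - a) m hmn (by omega)
    rw [show (⟨m + 2 * (b - 1 - a), by omega⟩ : Fin n) = ⟨n - 2, by omega⟩ from
      Fin.mk_eq_mk.mpr (by omega)]
    exact gp_base2 Φ h g hg hn2
  · obtain ⟨a, ha⟩ := ho
    rw [show (⟨m, hmn⟩ : Fin n) = ⟨1 + 2 * a, by omega⟩ from Fin.mk_eq_mk.mpr (by omega)]
    exact gp_up Φ h g hg a 1 hn2 (by omega) (gp_base1 Φ h g hg hn2)

lemma gp_indep_odd (hn : Odd n) (g : Fin n → Quaternion ℝ)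
    (hg : ∀ j, ∑ s, g s * Φ.adjMatrix s j = 0)
    (h0 : g ⟨0, hn.pos⟩ = 0) : ∀ s, g s = 0 := by
  intro s
  obtain ⟨m, hmn⟩ := s
  rcases Nat.even_or_odd m with he | ho
  · obtain ⟨a, ha⟩ := he
    rw [show (⟨m, hmn⟩ : Fin n) = ⟨0 + 2 * a, by omega⟩ from Fin.mk_eq_mk.mpr (by omega)]
    exact gp_up Φ h g hg a 0 hn.pos (by omega) h0
  · obtain ⟨a, ha⟩ := ho
    have hn2 : 1 < n := by omega
    rw [show (⟨m, hmn⟩ : Fin n) = ⟨1 + 2 * a, by omega⟩ from Fin.mk_eq_mk.mpr (by omega)]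
    exact gp_up Φ h g hg a 1 hn2 (by omega) (gp_base1 Φ h g hg hn2)

end Aux

/-- Coefficients (on even positions) of the linear dependency among the rows when `n` is odd. -/
noncomputable def gpDSeq {n : ℕ} (Φ : QuaternionUnitGainGraph (Fin n)) : ℕ → Quaternion ℝ
  | 0 => 1
  | k + 1 =>
    if hk : 2 * k + 2 < n then
      -(gpDSeq Φ k) * Φ.adjMatrix ⟨2 * k, by omega⟩ ⟨2 * k + 1, by omega⟩ *
        (Φ.adjMatrix ⟨2 * k + 2, hk⟩ ⟨2 * k + 1, by omega⟩)⁻¹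
    else 0

/-- The full coefficient vector of the linear dependency among the rows when `n` is odd. -/
noncomputable def gpCSeq {n : ℕ} (Φ : QuaternionUnitGainGraph (Fin n)) (s : Fin n) :
    Quaternion ℝ :=
  if (s : ℕ) % 2 = 0 then gpDSeq Φ ((s : ℕ) / 2) else 0

section Dep

variable {n : ℕ} (Φ : QuaternionUnitGainGraph (Fin n)) (h : Φ.G = SimpleGraph.pathGraph n)

include h

lemma gp_dep (hodd : Odd n) : ∀ j : Fin n, ∑ s, gpCSeq Φ s * Φ.adjMatrix s j = 0 := by
  intro j
  rcases Nat.even_or_odd (j : ℕ) with hje | hjo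
  · obtain ⟨a, ha⟩ := hje
    apply Finset.sum_eq_zero
    intro s _
    rcases eq_or_ne ((s : ℕ) + 1) (j : ℕ) with h1 | h1
    · rw [gpCSeq, if_neg (by omega), zero_mul]
    · rcases eq_or_ne ((j : ℕ) + 1) (s : ℕ) with h2 | h2
      · rw [gpCSeq, if_neg (by omega), zero_mul]
      · rw [gp_entry_zero Φ h h1 h2, mul_zero]
  · obtain ⟨k, hk⟩ := hjo
    obtain ⟨b, hb⟩ := hodd
    have hjlt := j.isLt
    have hkn : 2 * k + 2 < n := by omega
    rw [show j = ⟨2 * k + 1, by omega⟩ from Fin.ext (by simp; omega)]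
    rw [gp_sum_two Φ h _ (2 * k) hkn]
    have c1 : gpCSeq Φ ⟨2 * k, by omega⟩ = gpDSeq Φ k := by
      rw [gpCSeq, if_pos (by simp)]
      congr 1
      simp
    have c2 : gpCSeq Φ ⟨2 * k + 2, hkn⟩ = gpDSeq Φ (k + 1) := by
      rw [gpCSeq, if_pos (by simp)]
      congr 1
      simp
    rw [c1, c2, gpDSeq, dif_pos hkn]
    have hA2 : Φ.adjMatrix ⟨2 * k + 2, hkn⟩ ⟨2 * k + 1, by omega⟩ ≠ 0 :=
      gp_entry_ne_zero Φ h (Or.inr rfl)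
    rw [mul_assoc, inv_mul_cancel₀ hA2, mul_one, neg_mul, add_neg_cancel]

end Dep

/-- The row left rank of a quaternion unit gain path on `n` vertices is `n` when
`n` is even and `n - 1` when `n` is odd. -/
theorem gainPath_rank {n : ℕ} (Φ : QuaternionUnitGainGraph (Fin n))
    (h : Φ.G = SimpleGraph.pathGraph n) :
    (Even n → Φ.rank = n) ∧ (Odd n → Φ.rank = n - 1) := by
  constructor
  · intro hn
    have hli : LinearIndependent (Quaternion ℝ) (fun s : Fin n => Φ.adjMatrix s) := by
      rw [Fintype.linearIndependent_iff]
      intro g hg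
      have hg' : ∀ j, ∑ s, g s * Φ.adjMatrix s j = 0 := by
        intro j
        have := congrFun hg j
        simpa [Finset.sum_apply] using this
      exact gp_indep_even Φ h hn g hg'
    show Module.finrank (Quaternion ℝ)
      (Submodule.span (Quaternion ℝ) (Set.range (fun s : Fin n => Φ.adjMatrix s))) = n
    rw [finrank_span_eq_card hli, Fintype.card_fin]
  · intro hn
    obtain ⟨m, rfl⟩ : ∃ m, n = m + 1 := ⟨n - 1, by have := hn.pos; omega⟩
    set w : Fin m → (Fin (m + 1) → Quaternion ℝ) := fun t => Φ.adjMatrix t.succ with hw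
    have hliw : LinearIndependent (Quaternion ℝ) w := by
      rw [Fintype.linearIndependent_iff]
      intro g' hg'
      set g : Fin (m + 1) → Quaternion ℝ := Fin.cons 0 g' with hgdef
      have hsum : ∑ s, g s • (fun s : Fin (m + 1) => Φ.adjMatrix s) s = 0 := by
        rw [Fin.sum_univ_succ]
        simp only [hgdef, Fin.cons_zero, Fin.cons_succ, zero_smul, zero_add]
        exact hg'
      have hg2 : ∀ j, ∑ s, g s * Φ.adjMatrix s j = 0 := by
        intro j
        have := congrFun hsum j
        simpa [Finset.sum_apply] using this
      have h0 : g ⟨0, hn.pos⟩ = 0 := by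
        rw [show (⟨0, hn.pos⟩ : Fin (m + 1)) = 0 from rfl, hgdef, Fin.cons_zero]
      have hall := gp_indep_odd Φ h hn g hg2 h0
      intro t
      have := hall t.succ
      rwa [hgdef, Fin.cons_succ] at this
    have hmem : Φ.adjMatrix (0 : Fin (m + 1)) ∈
        Submodule.span (Quaternion ℝ) (Set.range w) := by
      have hdep := gp_dep Φ h hn
      have hsum : ∑ s, gpCSeq Φ s • (fun s : Fin (m + 1) => Φ.adjMatrix s) s = 0 := by
        funext j
        have := hdep j
        simpa [Finset.sum_apply] using this
      rw [Fin.sum_univ_succ] at hsum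
      have hc0 : gpCSeq Φ (0 : Fin (m + 1)) = 1 := by
        rw [gpCSeq]
        simp [gpDSeq]
      rw [hc0, one_smul] at hsum
      have hrow : Φ.adjMatrix (0 : Fin (m + 1)) =
          ∑ t : Fin m, (-(gpCSeq Φ t.succ)) • w t := by
        have h2 : Φ.adjMatrix (0 : Fin (m + 1)) =
            -∑ t : Fin m, gpCSeq Φ t.succ • w t := eq_neg_of_add_eq_zero_left hsum
        rw [h2, ← Finset.sum_neg_distrib]
        exact Finset.sum_congr rfl fun t _ => (neg_smul _ _).symm
      rw [hrow]
      exact Submodule.sum_mem _ fun t _ =>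
        Submodule.smul_mem _ _ (Submodule.subset_span ⟨t, rfl⟩)
    have hrange : Set.range (fun s : Fin (m + 1) => Φ.adjMatrix s) =
        insert (Φ.adjMatrix (0 : Fin (m + 1))) (Set.range w) := by
      rw [Fin.range_fin_succ]
      rfl
    show Module.finrank (Quaternion ℝ)
      (Submodule.span (Quaternion ℝ)
        (Set.range (fun s : Fin (m + 1) => Φ.adjMatrix s))) = m + 1 - 1
    rw [hrange, Submodule.span_insert_eq_span hmem, finrank_span_eq_card hliw, Fintype.card_fin]
    omega
end

section
/- Let Φ be a quaternion unit gain graph on n vertices with no isolated vertices and maximum degree Δ. Then the row left rank of A(Φ) satisfies r(Φ) ≥ n/Δ. -/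
/-- For a quaternion unit gain graph on `n` vertices with no isolated vertices and
maximum degree `Δ`, the row left rank is at least `n / Δ`. -/
theorem gain_rank_ge_card_div_maxDegree {V : Type*} [Fintype V] [DecidableEq V]
    (Φ : QuaternionUnitGainGraph V) [DecidableRel Φ.G.Adj]
    (h : ∀ v : V, 0 < Φ.G.degree v) :
    (Fintype.card V : ℝ) / (Φ.G.maxDegree : ℝ) ≤ (Φ.rank : ℝ) := by
  classical
  set Q := Quaternion ℝ
  set A := Φ.adjMatrix with hAdef
  have hA : ∀ u v, A u v ≠ 0 ↔ Φ.G.Adj u v := by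
    intro u v
    constructor
    · intro h0
      by_contra hadj
      exact h0 (Φ.gain_zero u v hadj)
    · intro hadj h0
      have h1 := Φ.gain_unit u v hadj
      have : Φ.gain u v = 0 := h0
      rw [this, norm_zero] at h1
      norm_num at h1
  set T : Set (V → Q) := Set.range (fun i j => A i j) with hTdef
  obtain ⟨B, hBT, hspan, hli⟩ := exists_linearIndependent Q T
  have hBfin : B.Finite := (Set.finite_range _).subset hBT
  set Bf := hBfin.toFinset with hBfdef
  have hrank : Φ.rank = Bf.card := by
    show rowLeftRank A = Bf.card
    unfold rowLeftRank
    rw [← hspan, rank_span_set hli]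
    show Nat.card ↑B = Bf.card
    rw [Nat.card_coe_set_eq, Set.ncard_eq_toFinset_card B hBfin]
  have hcover : ∀ w : V, ∃ b ∈ Bf, b w ≠ 0 := by
    intro w
    obtain ⟨u, hu⟩ := (Φ.G.degree_pos_iff_exists_adj w).mp (h w)
    have hrow : (fun j => A u j) ∈ Submodule.span Q B := by
      rw [hspan]
      exact Submodule.subset_span ⟨u, rfl⟩
    by_contra hcon
    push_neg at hcon
    have hB0 : B ⊆ (LinearMap.ker (LinearMap.proj (R := Q) (φ := fun _ : V => Q) w) :
        Submodule Q (V → Q)) := by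
      intro b hb
      simp only [SetLike.mem_coe, LinearMap.mem_ker, LinearMap.proj_apply]
      exact hcon b (hBfin.mem_toFinset.mpr hb)
    have hmem := Submodule.span_le.mpr hB0 hrow
    simp only [LinearMap.mem_ker, LinearMap.proj_apply] at hmem
    exact (hA u w).mpr hu.symm hmem
  have hcount : Fintype.card V ≤ Bf.card * Φ.G.maxDegree := by
    have hsub : (Finset.univ : Finset V) ⊆
        Bf.biUnion (fun b => Finset.univ.filter (fun w => b w ≠ 0)) := by
      intro w _
      obtain ⟨b, hb, hbw⟩ := hcover w
      exact Finset.mem_biUnion.mpr ⟨b, hb, by simp [hbw]⟩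
    calc Fintype.card V
        ≤ (Bf.biUnion (fun b => Finset.univ.filter (fun w => b w ≠ 0))).card := by
          rw [← Finset.card_univ]; exact Finset.card_le_card hsub
      _ ≤ ∑ b ∈ Bf, (Finset.univ.filter (fun w => b w ≠ 0)).card :=
          Finset.card_biUnion_le
      _ ≤ ∑ _b ∈ Bf, Φ.G.maxDegree := by
          apply Finset.sum_le_sum
          intro b hb
          obtain ⟨s, hs⟩ := hBT (hBfin.mem_toFinset.mp hb)
          have hfilter : Finset.univ.filter (fun w => b w ≠ 0) = Φ.G.neighborFinset s := by
            ext w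
            simp only [Finset.mem_filter, Finset.mem_univ, true_and,
              SimpleGraph.mem_neighborFinset]
            rw [← hs]
            exact hA s w
          rw [hfilter]
          exact Φ.G.degree_le_maxDegree s
      _ = Bf.card * Φ.G.maxDegree := by
          rw [Finset.sum_const, smul_eq_mul]
  rcases Nat.eq_zero_or_pos (Fintype.card V) with hc | hc
  · rw [hc]
    simp [div_nonneg]
  · have : Nonempty V := Fintype.card_pos_iff.mp hc
    obtain ⟨v⟩ := this
    have hΔ : 0 < Φ.G.maxDegree := lt_of_lt_of_le (h v) (Φ.G.degree_le_maxDegree v)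
    rw [div_le_iff₀ (by exact_mod_cast hΔ)]
    rw [hrank]
    exact_mod_cast hcount
end

section
/- Let Φ = C_n^φ be a quaternion unit gain cycle with gain product φ(C_n) = φ_{v₁v₂}φ_{v₂v₃}⋯φ_{v_n v₁}. If n is even and φ(C_n) = (-1)^{n/2}, then the row left rank of A(Φ) is n - 2; if n is even and φ(C_n) ≠ (-1)^{n/2}, the rank is n; if n is odd and Re((-1)^{(n-1)/2} φ(C_n)) ≠ 0, the rank is n; and if n is odd and Re((-1)^{(n-1)/2} φ(C_n)) = 0, the rank is n - 1. -/
/-!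
A row vector `x` lies in the left kernel of `A(Φ)` iff, along the cycle,
`x_{j+1} = -x_{j-1} φ_{j-1,j} φ_{j,j+1}`. Hence `x` is determined by two consecutive entries
`(a, b)`, and a pair extends to a kernel vector iff the recurrence returns to `(a, b)` after
`n` steps. For `n = 2m` this means `a = a (-1)^m φ(C_n)` and
`b = b (-1)^m φ_{12}⁻¹ φ(C_n) φ_{12}`, so the kernel has dimension `2` if `φ(C_n) = (-1)^m`
and `0` otherwise. For odd `n` the two entries trade places, `b` is determined by `a`, and the
condition on `a` is `a (1 + φ(C_n)²) = 0`; the kernel has dimension `1` if `φ(C_n)² = -1`,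
i.e. `Re φ(C_n) = 0` for a unit quaternion, and `0` otherwise. The rank is `n` minus the
dimension of this kernel.
-/

open Module

lemma rowLeftRank_add_finrank_ker {m n : Type*} [Fintype m]
    (A : Matrix m n (Quaternion ℝ)) :
    rowLeftRank A + finrank (Quaternion ℝ) (LinearMap.ker A.vecMulLinear) = Fintype.card m := by
  have h : rowLeftRank A = finrank (Quaternion ℝ) (LinearMap.range A.vecMulLinear) := by
    rw [range_vecMulLinear]; rfl
  rw [h, LinearMap.finrank_range_add_finrank_ker, finrank_fintype_fun_eq_card]

lemma add_mul_star_eq_zero_iff {R : Type*} [Ring R] [StarMul R] {u : R} (hu : u ∈ unitary R)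
    {a b : R} : a + b * star u = 0 ↔ b = -a * u := by
  constructor
  · intro h
    rw [← mul_one b, ← Unitary.star_mul_self_of_mem hu, ← mul_assoc,
      eq_neg_of_add_eq_zero_right h]
  · rintro rfl
    rw [mul_assoc, Unitary.mul_star_self_of_mem hu, mul_one, add_neg_cancel]

namespace Quaternion

lemma mem_unitary_of_norm_eq_one {u : ℍ} (hu : ‖u‖ = 1) : u ∈ unitary ℍ := by
  rw [Unitary.mem_iff, star_mul_self, self_mul_star, normSq_eq_norm_mul_self, hu]
  simp

lemma mul_self_eq_neg_one_iff {g : ℍ} (hg : ‖g‖ = 1) : g * g = -1 ↔ g.re = 0 := by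
  rw [← sq_eq_neg_normSq, normSq_eq_norm_mul_self, hg, sq]
  simp

end Quaternion

namespace SimpleGraph

open Fin.NatCast Fin.CommRing

lemma cycleGraph_adj_iff {n : ℕ} [NeZero n] (hn : 2 ≤ n) {u v : Fin n} :
    (cycleGraph n).Adj u v ↔ u = v + 1 ∨ v = u + 1 := by
  have hval : (1 : Fin n).val = 1 := by rw [Fin.val_one', Nat.mod_eq_of_lt hn]
  rw [cycleGraph_adj', ← hval, ← Fin.ext_iff, ← Fin.ext_iff, sub_eq_iff_eq_add, sub_eq_iff_eq_add,
    add_comm 1 v, add_comm 1 u]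

end SimpleGraph

section SegmentProd

variable {M : Type*} [Monoid M] (q : ℕ → M)

def segmentProd (a k : ℕ) : M := ((List.range k).map fun t => q (a + t)).prod

lemma segmentProd_succ (a k : ℕ) : segmentProd q a (k + 1) = segmentProd q a k * q (a + k) :=
  List.prod_range_succ _ _

lemma segmentProd_succ' (a k : ℕ) : segmentProd q a (k + 1) = q a * segmentProd q (a + 1) k := by
  simp only [segmentProd, List.prod_range_succ', add_zero, add_right_comm a, add_assoc]

variable {q}

lemma segmentProd_rotate {n : ℕ} (hq : Function.Periodic q n) :
    q 0 * segmentProd q 1 n = segmentProd q 0 n * q 0 := by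
  rw [← zero_add 1, ← segmentProd_succ', segmentProd_succ, hq 0]

open Fin.NatCast in
lemma prod_map_finRange_eq_segmentProd {n : ℕ} [NeZero n] (f : Fin n → M) :
    ((List.finRange n).map f).prod = segmentProd (fun k : ℕ => f k) 0 n := by
  simp [segmentProd, ← List.map_coe_finRange_eq_range, Function.comp_def]

lemma norm_segmentProd {R : Type*} [NormedDivisionRing R] {q : ℕ → R} (hq : ∀ k, ‖q k‖ = 1)
    (a k : ℕ) : ‖segmentProd q a k‖ = 1 := by
  induction k with
  | zero => simp [segmentProd]
  | succ k ih => rw [segmentProd_succ, norm_mul, ih, hq, one_mul]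

end SegmentProd

section TwoStepRecurrence

variable {R : Type*} [Ring R] (q : ℕ → R)

def twoStepSeq (a b : R) : ℕ → R
  | 0 => a
  | 1 => b
  | k + 2 => -twoStepSeq a b k * q k * q (k + 1)

variable {q}

lemma eq_twoStepSeq {y : ℕ → R} (hy : ∀ k, y (k + 2) = -y k * q k * q (k + 1)) :
    y = twoStepSeq q (y 0) (y 1) := by
  funext k
  induction k using Nat.twoStepInduction with
  | zero => rfl
  | one => rfl
  | more k ih _ => rw [hy, ih, twoStepSeq]

lemma twoStepSeq_two_mul (a b : R) (m : ℕ) :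
    twoStepSeq q a b (2 * m) = a * ((-1) ^ m * segmentProd q 0 (2 * m)) := by
  induction m with
  | zero => simp [twoStepSeq, segmentProd]
  | succ m ih =>
    rw [show 2 * (m + 1) = 2 * m + 1 + 1 by ring, twoStepSeq, ih, segmentProd_succ,
      segmentProd_succ, pow_succ]
    simp only [zero_add]
    noncomm_ring

lemma twoStepSeq_two_mul_add_one (a b : R) (m : ℕ) :
    twoStepSeq q a b (2 * m + 1) = b * ((-1) ^ m * segmentProd q 1 (2 * m)) := by
  induction m with
  | zero => simp [twoStepSeq, segmentProd]
  | succ m ih =>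
    rw [show 2 * (m + 1) + 1 = 2 * m + 1 + 2 by ring, twoStepSeq, ih,
      show 2 * (m + 1) = 2 * m + 1 + 1 by ring, segmentProd_succ, segmentProd_succ, pow_succ,
      add_comm 1 (2 * m), add_comm 1 (2 * m + 1)]
    noncomm_ring

lemma twoStepSeq_periodic {n : ℕ} (hq : Function.Periodic q n) {a b : R}
    (h₀ : twoStepSeq q a b n = a) (h₁ : twoStepSeq q a b (n + 1) = b) :
    Function.Periodic (twoStepSeq q a b) n := by
  have hshift := eq_twoStepSeq (y := fun k => twoStepSeq q a b (k + n)) fun k => by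
    rw [show k + 2 + n = k + n + 2 by ring, twoStepSeq, hq, add_right_comm, hq]
  simp only [zero_add, add_comm 1 n, h₀, h₁] at hshift
  exact congrFun hshift

lemma neg_one_pow_mul_segmentProd_rotate {n : ℕ} (hq : Function.Periodic q n) (m : ℕ) :
    q 0 * ((-1) ^ m * segmentProd q 1 n) = (-1) ^ m * segmentProd q 0 n * q 0 := by
  rw [← mul_assoc, ← ((Commute.neg_one_left _).pow_left m).eq, mul_assoc, segmentProd_rotate hq,
    mul_assoc]

end TwoStepRecurrence

section CyclicSolutions

open Fin.NatCast

variable {R : Type*} [Ring R] (q : ℕ → R) (n : ℕ) [NeZero n]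

def cyclicSolutions : Submodule R (Fin n → R) where
  carrier := {x | ∀ k : ℕ, x (k + 2 : ℕ) = -x k * q k * q (k + 1)}
  add_mem' {x y} hx hy k := by
    simp only [Pi.add_apply, hx k, hy k]
    noncomm_ring
  zero_mem' k := by simp
  smul_mem' c x hx k := by
    simp only [Pi.smul_apply, smul_eq_mul, hx k]
    noncomm_ring

def initialValues : (Fin n → R) →ₗ[R] R × R := (LinearMap.proj 0).prod (LinearMap.proj 1)

variable {q n}

lemma mem_cyclicSolutions {x : Fin n → R} :
    x ∈ cyclicSolutions q n ↔ ∀ k : ℕ, x (k + 2 : ℕ) = -x k * q k * q (k + 1) :=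
  Iff.rfl

@[simp]
lemma initialValues_apply (x : Fin n → R) : initialValues n x = (x 0, x 1) := rfl

lemma eq_twoStepSeq_of_mem_cyclicSolutions {x : Fin n → R} (hx : x ∈ cyclicSolutions q n) :
    (fun k : ℕ => x k) = twoStepSeq q (x 0) (x 1) := by
  simpa using eq_twoStepSeq (y := fun k : ℕ => x k) hx

lemma initialValues_injOn :
    Set.InjOn (initialValues n) (cyclicSolutions q n : Set (Fin n → R)) := by
  intro x hx y hy hxy
  simp only [initialValues_apply, Prod.mk.injEq] at hxy
  have hseq := (eq_twoStepSeq_of_mem_cyclicSolutions hx).trans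
    (hxy.1 ▸ hxy.2 ▸ (eq_twoStepSeq_of_mem_cyclicSolutions hy).symm)
  funext j
  simpa using congrFun hseq j

lemma mem_map_initialValues_iff (hq : Function.Periodic q n) (p : R × R) :
    p ∈ (cyclicSolutions q n).map (initialValues n) ↔
      twoStepSeq q p.1 p.2 n = p.1 ∧ twoStepSeq q p.1 p.2 (n + 1) = p.2 := by
  constructor
  · rintro ⟨x, hx, rfl⟩
    have hseq := eq_twoStepSeq_of_mem_cyclicSolutions hx
    refine ⟨?_, ?_⟩
    · simpa using (congrFun hseq n).symm
    · simpa using (congrFun hseq (n + 1)).symm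
  · rintro ⟨h₀, h₁⟩
    have hper := twoStepSeq_periodic hq h₀ h₁
    set x : Fin n → R := fun j => twoStepSeq q p.1 p.2 j with hx_def
    have hx : ∀ k : ℕ, x k = twoStepSeq q p.1 p.2 k := fun k => by
      simp [hx_def, Fin.val_natCast, hper.map_mod_nat]
    refine ⟨x, fun k => ?_, ?_⟩
    · simp only [hx]; rfl
    · ext
      · simpa [twoStepSeq] using hx 0
      · simpa [twoStepSeq] using hx 1

end CyclicSolutions

section DivisionRing

open Fin.NatCast

variable {R : Type*} [DivisionRing R] {q : ℕ → R} {n : ℕ} [NeZero n]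

lemma finrank_map_initialValues :
    finrank R ((cyclicSolutions q n).map (initialValues n)) =
      finrank R (cyclicSolutions q n) := by
  rw [← LinearMap.range_domRestrict]
  refine LinearMap.finrank_range_of_inj fun x y hxy => Subtype.ext ?_
  exact initialValues_injOn x.2 y.2 hxy

lemma finrank_cyclicSolutions_of_even_of_eq (hq : Function.Periodic q n) (hq0 : q 0 ≠ 0)
    (hn : Even n) (hg : segmentProd q 0 n = (-1) ^ (n / 2)) :
    finrank R (cyclicSolutions q n) = 2 := by
  suffices (cyclicSolutions q n).map (initialValues n) = ⊤ by
    rw [← finrank_map_initialValues, this, finrank_top, finrank_prod, finrank_self]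
  obtain ⟨m, rfl⟩ := even_iff_two_dvd.1 hn
  have hs : (-1 : R) ^ m * (-1) ^ m = 1 := by rw [← pow_add, Even.neg_one_pow ⟨m, rfl⟩]
  rw [show 2 * m / 2 = m by omega] at hg
  have hu₀ : (-1) ^ m * segmentProd q 0 (2 * m) = 1 := by rw [hg, hs]
  have hu₁ : (-1) ^ m * segmentProd q 1 (2 * m) = 1 := by
    rw [← mul_eq_left₀ hq0, neg_one_pow_mul_segmentProd_rotate hq, hu₀, one_mul]
  refine eq_top_iff.2 fun p _ => (mem_map_initialValues_iff hq p).2 ?_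
  rw [twoStepSeq_two_mul, twoStepSeq_two_mul_add_one, hu₀, hu₁, mul_one, mul_one]
  exact ⟨rfl, rfl⟩

lemma finrank_cyclicSolutions_of_even_of_ne (hq : Function.Periodic q n) (hq0 : q 0 ≠ 0)
    (hn : Even n) (hg : segmentProd q 0 n ≠ (-1) ^ (n / 2)) :
    finrank R (cyclicSolutions q n) = 0 := by
  suffices (cyclicSolutions q n).map (initialValues n) = ⊥ by
    rw [← finrank_map_initialValues, this, finrank_bot]
  obtain ⟨m, rfl⟩ := even_iff_two_dvd.1 hn
  have hs : (-1 : R) ^ m * (-1) ^ m = 1 := by rw [← pow_add, Even.neg_one_pow ⟨m, rfl⟩]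
  rw [show 2 * m / 2 = m by omega] at hg
  have hu₀ : (-1) ^ m * segmentProd q 0 (2 * m) ≠ 1 := fun h => hg <| by
    calc segmentProd q 0 (2 * m) = (-1) ^ m * ((-1) ^ m * segmentProd q 0 (2 * m)) := by
          rw [← mul_assoc, hs, one_mul]
      _ = (-1) ^ m := by rw [h, mul_one]
  have hu₁ : (-1) ^ m * segmentProd q 1 (2 * m) ≠ 1 := fun h => hu₀ <|
    (mul_eq_right₀ hq0).1 (by rw [← neg_one_pow_mul_segmentProd_rotate hq, h, mul_one])
  refine eq_bot_iff.2 fun p hp => ?_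
  rw [mem_map_initialValues_iff hq, twoStepSeq_two_mul, twoStepSeq_two_mul_add_one] at hp
  rw [Submodule.mem_bot, Prod.ext_iff]
  constructor
  · by_contra h; exact hu₀ ((mul_eq_left₀ h).1 hp.1)
  · by_contra h; exact hu₁ ((mul_eq_left₀ h).1 hp.2)

lemma mem_map_initialValues_iff_of_odd (hq : Function.Periodic q n) (hn : Odd n) {a b : R} :
    (a, b) ∈ (cyclicSolutions q n).map (initialValues n) ↔
      b = a * -((-1) ^ (n / 2) * segmentProd q 0 n * q 0) ∧
        a * (segmentProd q 0 n * segmentProd q 0 n) = -a := by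
  obtain ⟨m, rfl⟩ := hn
  set g := segmentProd q 0 (2 * m + 1)
  have hg : q 0 * segmentProd q 1 (2 * m) = g := (segmentProd_succ' q 0 _).symm
  have hc : -((-1) ^ m * g * q 0) * ((-1) ^ m * segmentProd q 1 (2 * m)) = -(g * g) := by
    calc _ = -(g * (q 0 * segmentProd q 1 (2 * m))) := by
          obtain hs | hs := neg_one_pow_eq_or R m <;> rw [hs] <;> noncomm_ring
      _ = -(g * g) := by rw [hg]
  have hseq : twoStepSeq q a b (2 * m + 1 + 1) = a * -((-1) ^ m * g * q 0) := by
    rw [show 2 * m + 1 + 1 = 2 * (m + 1) by ring, twoStepSeq_two_mul,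
      show 2 * (m + 1) = 2 * m + 1 + 1 by ring, segmentProd_succ, zero_add, hq.eq, pow_succ]
    noncomm_ring
  rw [mem_map_initialValues_iff hq, twoStepSeq_two_mul_add_one, hseq,
    show (2 * m + 1) / 2 = m by omega]
  constructor
  · rintro ⟨h₁, rfl⟩
    refine ⟨rfl, ?_⟩
    rw [mul_assoc, hc, mul_neg] at h₁
    exact neg_eq_iff_eq_neg.1 h₁
  · rintro ⟨rfl, h⟩
    refine ⟨?_, rfl⟩
    rw [mul_assoc, hc, mul_neg, h, neg_neg]

lemma finrank_cyclicSolutions_of_odd_of_ne (hq : Function.Periodic q n) (hn : Odd n)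
    (hg : segmentProd q 0 n * segmentProd q 0 n ≠ -1) :
    finrank R (cyclicSolutions q n) = 0 := by
  suffices (cyclicSolutions q n).map (initialValues n) = ⊥ by
    rw [← finrank_map_initialValues, this, finrank_bot]
  refine eq_bot_iff.2 fun ⟨a, b⟩ hp => ?_
  obtain ⟨rfl, h⟩ := (mem_map_initialValues_iff_of_odd hq hn).1 hp
  obtain rfl : a = 0 := by
    by_contra ha
    exact hg (mul_left_cancel₀ ha (h.trans (mul_neg_one a).symm))
  simp

lemma finrank_cyclicSolutions_of_odd_of_eq (hq : Function.Periodic q n) (hn : Odd n)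
    (hg : segmentProd q 0 n * segmentProd q 0 n = -1) :
    finrank R (cyclicSolutions q n) = 1 := by
  suffices (cyclicSolutions q n).map (initialValues n) =
      R ∙ (1, -((-1) ^ (n / 2) * segmentProd q 0 n * q 0)) by
    rw [← finrank_map_initialValues, this, finrank_span_singleton (by simp)]
  ext ⟨a, b⟩
  rw [mem_map_initialValues_iff_of_odd hq hn, hg, mul_neg_one, Submodule.mem_span_singleton]
  simp [Prod.ext_iff, eq_comm]

end DivisionRing

namespace QuaternionUnitGainGraph

open Fin.NatCast Fin.CommRing Matrix Quaternion

variable {n : ℕ} [NeZero n] (Φ : QuaternionUnitGainGraph (Fin n))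

def cycleGain (k : ℕ) : ℍ := Φ.gain k (k + 1)

lemma cycleGain_periodic : Function.Periodic Φ.cycleGain n := fun k => by
  simp [cycleGain]

variable {Φ}

lemma norm_cycleGain (hn : 3 ≤ n) (hG : Φ.G = SimpleGraph.cycleGraph n) (k : ℕ) :
    ‖Φ.cycleGain k‖ = 1 :=
  Φ.gain_unit _ _ (by rw [hG, SimpleGraph.cycleGraph_adj_iff (by omega)]; exact Or.inr rfl)

lemma vecMul_adjMatrix_apply (hn : 3 ≤ n) (hG : Φ.G = SimpleGraph.cycleGraph n)
    (x : Fin n → ℍ) (j : Fin n) :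
    (x ᵥ* Φ.adjMatrix) j = x (j - 1) * Φ.gain (j - 1) j + x (j + 1) * Φ.gain (j + 1) j := by
  have hne : j - 1 ≠ j + 1 := by
    intro h
    have h2 : ((2 : ℕ) : Fin n) = 0 := by
      push_cast
      linear_combination -h
    rw [Fin.ext_iff, Fin.val_natCast, Nat.mod_eq_of_lt (by omega)] at h2
    simp at h2
  refine Fintype.sum_eq_add _ _ hne fun i hi => mul_eq_zero_of_right _ (Φ.gain_zero i j ?_)
  rw [hG, SimpleGraph.cycleGraph_adj_iff (by omega)]
  rintro (h | h)
  · exact hi.2 h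
  · exact hi.1 (by rw [h, add_sub_cancel_right])

lemma ker_vecMulLinear_adjMatrix (hn : 3 ≤ n) (hG : Φ.G = SimpleGraph.cycleGraph n) :
    LinearMap.ker Φ.adjMatrix.vecMulLinear = cyclicSolutions Φ.cycleGain n := by
  have hsurj : Function.Surjective fun k : ℕ => ((k + 1 : ℕ) : Fin n) := fun j =>
    ⟨(j - 1).val, by simp⟩
  ext x
  simp only [LinearMap.mem_ker, vecMulLinear_apply, funext_iff, Pi.zero_apply,
    vecMul_adjMatrix_apply hn hG, hsurj.forall, mem_cyclicSolutions]
  refine forall_congr' fun k => ?_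
  have hadj : Φ.G.Adj ((k : Fin n) + 1) ((k : Fin n) + 1 + 1) := by
    rw [hG, SimpleGraph.cycleGraph_adj_iff (by omega)]
    exact Or.inr rfl
  simp only [cycleGain]
  push_cast
  rw [add_sub_cancel_right, ← one_add_one_eq_two, ← add_assoc, Φ.gain_inv _ _ hadj,
    add_mul_star_eq_zero_iff (mem_unitary_of_norm_eq_one (Φ.gain_unit _ _ hadj))]
  simp only [neg_mul]

lemma rank_add_finrank_cyclicSolutions (hn : 3 ≤ n) (hG : Φ.G = SimpleGraph.cycleGraph n) :
    Φ.rank + finrank ℍ (cyclicSolutions Φ.cycleGain n) = n := by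
  rw [← ker_vecMulLinear_adjMatrix hn hG]
  exact (rowLeftRank_add_finrank_ker Φ.adjMatrix).trans (Fintype.card_fin n)

end QuaternionUnitGainGraph

/-- The row left rank of a quaternion unit gain cycle `C_n^φ` (`n ≥ 3`), in terms
of the gain product `φ(C_n) = φ_{v₁v₂}φ_{v₂v₃}⋯φ_{vₙv₁}`:
rank `n - 2` if `n` even and `φ(C_n) = (-1)^{n/2}`; rank `n` if `n` even and
`φ(C_n) ≠ (-1)^{n/2}`; rank `n` if `n` odd and `Re((-1)^{(n-1)/2}φ(C_n)) ≠ 0`;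
rank `n - 1` if `n` odd and `Re((-1)^{(n-1)/2}φ(C_n)) = 0`. -/
theorem gainCycle_rank {n : ℕ} (hn : 3 ≤ n) (Φ : QuaternionUnitGainGraph (Fin n))
    (hG : Φ.G = SimpleGraph.cycleGraph n)
    (g : Quaternion ℝ)
    (hg : g = ((List.finRange n).map (fun i => Φ.gain i (i + ⟨1, by omega⟩))).prod) :
    (Even n → g = (-1 : Quaternion ℝ) ^ (n / 2) → Φ.rank = n - 2) ∧
    (Even n → g ≠ (-1 : Quaternion ℝ) ^ (n / 2) → Φ.rank = n) ∧
    (Odd n → ((-1 : Quaternion ℝ) ^ ((n - 1) / 2) * g).re ≠ 0 → Φ.rank = n) ∧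
    (Odd n → ((-1 : Quaternion ℝ) ^ ((n - 1) / 2) * g).re = 0 → Φ.rank = n - 1) := by
  have : NeZero n := ⟨by omega⟩
  have hq := Φ.cycleGain_periodic
  have hnorm := QuaternionUnitGainGraph.norm_cycleGain hn hG
  have hq0 : Φ.cycleGain 0 ≠ 0 := norm_ne_zero_iff.1 (by rw [hnorm]; norm_num)
  have hrank := Φ.rank_add_finrank_cyclicSolutions hn hG
  obtain rfl : g = segmentProd Φ.cycleGain 0 n := by
    rw [hg, show (⟨1, by omega⟩ : Fin n) = 1 from Fin.ext (Nat.mod_eq_of_lt (by omega)).symm]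
    exact prod_map_finRange_eq_segmentProd _
  have hsq : ∀ k : ℕ, ((-1) ^ k * segmentProd Φ.cycleGain 0 n).re = 0 ↔
      segmentProd Φ.cycleGain 0 n * segmentProd Φ.cycleGain 0 n = -1 := fun k => by
    rw [Quaternion.mul_self_eq_neg_one_iff (norm_segmentProd hnorm 0 n)]
    obtain h | h := neg_one_pow_eq_or (Quaternion ℝ) k <;> simp [h]
  refine ⟨fun he h => ?_, fun he h => ?_, fun ho h => ?_, fun ho h => ?_⟩
  · have := finrank_cyclicSolutions_of_even_of_eq hq hq0 he h; omega
  · have := finrank_cyclicSolutions_of_even_of_ne hq hq0 he h; omega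
  · have := finrank_cyclicSolutions_of_odd_of_ne hq ho ((hsq _).not.1 h); omega
  · have := finrank_cyclicSolutions_of_odd_of_eq hq ho ((hsq _).1 h); omega
end

section
/- Let T be a tree with a perfect matching M, and let P = x₁x₂⋯x_k (k ≥ 3) be a longest path in T. Then x₁ and x_k have degree 1 in T, and x₂ and x_{k-1} have degree 2 in T. -/
open SimpleGraph Walk

/-- In an acyclic graph, every neighbor of the first endpoint of a longest path
is the second vertex of the path. -/
lemma neighbor_eq_of_longest {V : Type*} [DecidableEq V] {G : SimpleGraph V} (hac : G.IsAcyclic)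
    {x₁ xk : V} (p : G.Walk x₁ xk) (hp : p.IsPath)
    (hlong : ∀ {a b : V} (q : G.Walk a b), q.IsPath → q.length ≤ p.length)
    {y : V} (hy : G.Adj x₁ y) : y = p.getVert 1 := by
  by_cases hmem : y ∈ p.support
  · -- the single edge and the initial segment are both paths from x₁ to y
    have huniq := SimpleGraph.isAcyclic_iff_path_unique.mp hac
      ⟨p.takeUntil y hmem, hp.takeUntil hmem⟩
      ⟨Walk.cons hy Walk.nil, by simp [Walk.isPath_def, hy.ne]⟩
    have hte : p.takeUntil y hmem = Walk.cons hy Walk.nil := by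
      simpa using congrArg Subtype.val huniq
    have hspec := p.take_spec hmem
    rw [hte] at hspec
    have h2 := congrArg (fun w : G.Walk x₁ xk => w.getVert 1) hspec
    simpa using h2
  · -- otherwise the path could be extended, contradicting maximality
    have hq : (Walk.cons hy.symm p).IsPath := hp.cons hmem
    have := hlong _ hq
    simp at this

/-- The first endpoint of a longest path (with length ≥ 1) has degree 1. -/
lemma degree_endpoint_of_longest {V : Type*} [Fintype V] [DecidableEq V]
    {G : SimpleGraph V} [DecidableRel G.Adj] (hac : G.IsAcyclic)
    {x₁ xk : V} (p : G.Walk x₁ xk) (hp : p.IsPath)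
    (hlong : ∀ {a b : V} (q : G.Walk a b), q.IsPath → q.length ≤ p.length)
    (hk : 1 ≤ p.length) : G.degree x₁ = 1 := by
  have hadj : G.Adj x₁ (p.getVert 1) := by
    simpa using p.adj_getVert_succ (i := 0) hk
  have hset : G.neighborFinset x₁ = {p.getVert 1} := by
    ext y
    simp only [SimpleGraph.mem_neighborFinset, Finset.mem_singleton]
    constructor
    · exact fun h => neighbor_eq_of_longest hac p hp hlong h
    · rintro rfl; exact hadj
  rw [SimpleGraph.degree, hset, Finset.card_singleton]

/-- The second vertex of a longest path (length ≥ 2) in a tree with a perfect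
matching has degree 2. -/
lemma degree_second_of_longest {V : Type*} [Fintype V] [DecidableEq V]
    {G : SimpleGraph V} [DecidableRel G.Adj] (hT : G.IsTree)
    (M : G.Subgraph) (hM : M.IsPerfectMatching)
    {x₁ xk : V} (p : G.Walk x₁ xk) (hp : p.IsPath)
    (hlong : ∀ {a b : V} (q : G.Walk a b), q.IsPath → q.length ≤ p.length)
    (hk : 2 ≤ p.length) : G.degree (p.getVert 1) = 2 := by
  have hac := hT.IsAcyclic
  -- destructure p = cons h₁ (cons h₂ r)
  cases p with
  | nil => simp at hk
  | cons h₁ q =>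
  cases q with
  | nil => simp at hk
  | @cons _ x₃ _ h₂ r =>
  rename_i x₂
  have hpgv1 : (Walk.cons h₁ (Walk.cons h₂ r)).getVert 1 = x₂ := rfl
  rw [hpgv1]
  have hq : (Walk.cons h₂ r).IsPath := hp.of_cons
  have hx₁ : x₁ ∉ (Walk.cons h₂ r).support := by
    intro h
    exact ((Walk.cons_isPath_iff _ _).mp hp).2 h
  have hx₁x₃ : x₁ ≠ x₃ := by
    intro h
    exact hx₁ (by rw [h]; simp)
  -- every neighbor of x₂ is x₁ or x₃
  have key : ∀ y, G.Adj x₂ y → y = x₁ ∨ y = x₃ := by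
    intro y hy
    by_contra hcon
    push_neg at hcon
    obtain ⟨hyx₁, hyx₃⟩ := hcon
    -- y is not on (cons h₂ r), else unique paths force y = x₃
    have hymem : y ∉ (Walk.cons h₂ r).support := by
      intro hmem
      have hyx₂ : y ≠ x₂ := fun h => G.irrefl (h ▸ hy)
      have huniq := SimpleGraph.isAcyclic_iff_path_unique.mp hac
        ⟨(Walk.cons h₂ r).takeUntil y hmem, hq.takeUntil hmem⟩
        ⟨Walk.cons hy Walk.nil, by simp [Walk.isPath_def, hy.ne]⟩
      have hte : (Walk.cons h₂ r).takeUntil y hmem = Walk.cons hy Walk.nil := by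
        simpa using congrArg Subtype.val huniq
      have hspec := (Walk.cons h₂ r).take_spec hmem
      rw [hte] at hspec
      have h2 := congrArg (fun w : G.Walk x₂ xk => w.getVert 1) hspec
      have hx₃y : y = x₃ := by simpa using h2
      exact hyx₃ hx₃y
    -- q' = y - x₂ - x₃ - ... - xk is also a longest path
    set q' : G.Walk y xk := Walk.cons hy.symm (Walk.cons h₂ r) with hq'
    have hq'path : q'.IsPath := hq.cons hymem
    have hq'len : q'.length = (Walk.cons h₁ (Walk.cons h₂ r)).length := by
      simp [hq']
    have hlong' : ∀ {a b : V} (w : G.Walk a b), w.IsPath → w.length ≤ q'.length := by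
      intro a b w hw
      rw [hq'len]
      exact hlong w hw
    -- unique neighbors of the leaves x₁ and y
    have hnx₁ : ∀ z, G.Adj x₁ z → z = x₂ :=
      fun z hz => neighbor_eq_of_longest hac _ hp hlong hz
    have hny : ∀ z, G.Adj y z → z = x₂ := by
      intro z hz
      have := neighbor_eq_of_longest hac q' hq'path hlong' hz
      simpa [hq'] using this
    -- matching: both x₁ and y must be matched to x₂
    obtain ⟨hmatch, hverts⟩ := hM
    obtain ⟨w₁, hw₁, _⟩ := hmatch (hverts x₁)
    obtain ⟨w₂, hw₂, _⟩ := hmatch (hverts y)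
    have hw₁x₂ : w₁ = x₂ := hnx₁ w₁ (M.adj_sub hw₁)
    have hw₂x₂ : w₂ = x₂ := hny w₂ (M.adj_sub hw₂)
    obtain ⟨w₃, _, huw⟩ := hmatch (hverts x₂)
    have e₁ : x₁ = w₃ := huw x₁ (by rw [hw₁x₂] at hw₁; exact hw₁.symm)
    have e₂ : y = w₃ := huw y (by rw [hw₂x₂] at hw₂; exact hw₂.symm)
    exact hyx₁ (e₂.trans e₁.symm)
  have hadj₁ : G.Adj x₂ x₁ := h₁.symm
  have hadj₃ : G.Adj x₂ x₃ := h₂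
  have hset : G.neighborFinset x₂ = {x₁, x₃} := by
    ext y
    simp only [SimpleGraph.mem_neighborFinset, Finset.mem_insert, Finset.mem_singleton]
    constructor
    · exact fun h => key y h
    · rintro (rfl | rfl)
      · exact hadj₁
      · exact hadj₃
  rw [SimpleGraph.degree, hset,
    Finset.card_insert_of_notMem (by simpa using hx₁x₃), Finset.card_singleton]

/-- In a tree with a perfect matching, the endpoints of a longest path
`x₁x₂⋯x_k` (`k ≥ 3`) have degree 1, and their neighbors `x₂`, `x_{k-1}` on the
path have degree 2. -/
theorem tree_perfectMatching_longest_path {V : Type*} [Fintype V] [DecidableEq V]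
    (G : SimpleGraph V) [DecidableRel G.Adj] (hT : G.IsTree)
    (M : G.Subgraph) (hM : M.IsPerfectMatching)
    {x₁ xk : V} (p : G.Walk x₁ xk) (hp : p.IsPath)
    (hlong : ∀ {a b : V} (q : G.Walk a b), q.IsPath → q.length ≤ p.length)
    (hk : 2 ≤ p.length) :
    G.degree x₁ = 1 ∧ G.degree xk = 1 ∧
    G.degree (p.getVert 1) = 2 ∧ G.degree (p.getVert (p.length - 1)) = 2 := by
  have hac := hT.IsAcyclic
  have hrevpath : p.reverse.IsPath := hp.reverse
  have hrevlen : p.reverse.length = p.length := p.length_reverse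
  have hlong' : ∀ {a b : V} (q : G.Walk a b), q.IsPath → q.length ≤ p.reverse.length := by
    intro a b q hq; rw [hrevlen]; exact hlong q hq
  have hrevk : 2 ≤ p.reverse.length := by rw [hrevlen]; exact hk
  have hgv : p.reverse.getVert 1 = p.getVert (p.length - 1) := p.getVert_reverse 1
  refine ⟨degree_endpoint_of_longest hac p hp hlong (by omega),
    degree_endpoint_of_longest hac p.reverse hrevpath hlong' (by omega),
    degree_second_of_longest hT M hM p hp hlong hk, ?_⟩
  rw [← hgv]
  exact degree_second_of_longest hT M hM p.reverse hrevpath hlong' hrevk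
end

section
/- Let Φ be a connected quaternion unit gain graph on n vertices with maximum degree Δ ≥ 2. Then the row left rank of A(Φ) satisfies r(Φ) ≥ (n - 2)/(Δ - 1). -/
open Finset

namespace SimpleGraph

variable {V : Type*}

theorem Preconnected.mem_of_adj_closed {G : SimpleGraph V} (hG : G.Preconnected) {S : Set V}
    {u v : V} (hu : u ∈ S) (hS : ∀ x y, x ∈ S → G.Adj x y → y ∈ S) : v ∈ S := by
  by_contra hv
  obtain ⟨p⟩ := hG u v
  obtain ⟨d, -, hd, hd'⟩ := p.exists_boundary_dart S hu hv
  exact hd' (hS _ _ hd d.adj)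

variable (G : SimpleGraph V) [DecidableEq V] [DecidableRel G.Adj]

theorem card_interedges_add_two_le_insert {s : Finset V} {u w : V} (hu : u ∈ s)
    (hw : w ∉ s) (h : G.Adj u w) :
    #(G.interedges s s) + 2 ≤ #(G.interedges (insert w s) (insert w s)) := by
  have hsub : insert (u, w) (insert (w, u) (G.interedges s s)) ⊆
      G.interedges (insert w s) (insert w s) := by
    simp only [insert_subset_iff, mk_mem_interedges_iff, mem_insert, hu, h, h.symm, true_or,
      or_true, and_self, true_and]
    exact interedges_mono _ (subset_insert w s) (subset_insert w s)
  calc #(G.interedges s s) + 2 = #(insert (u, w) (insert (w, u) (G.interedges s s))) := by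
        rw [card_insert_of_notMem, card_insert_of_notMem] <;>
          simp [mk_mem_interedges_iff, hw, h.ne]
    _ ≤ _ := card_le_card hsub

variable [Fintype V]

theorem card_interedges_le_maxDegree_mul (s t : Finset V) :
    #(G.interedges s t) ≤ G.maxDegree * #s := by
  refine card_le_mul_card_image_of_maps_to (fun e he => (G.mem_interedges_iff.1 he).1) _
    fun b _ => ?_
  calc #{e ∈ G.interedges s t | e.1 = b} ≤ #(G.neighborFinset b) := by
        refine card_le_card_of_injOn Prod.snd (fun e he => ?_) fun e he e' he' h => ?_
        · simp only [coe_filter, Set.mem_ofPred_eq, mem_interedges_iff] at he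
          simpa [← he.2] using he.1.2.2
        · simp only [coe_filter, Set.mem_ofPred_eq] at he he'
          exact Prod.ext (he.2.trans he'.2.symm) h
    _ ≤ G.maxDegree := G.degree_le_maxDegree b

theorem card_interedges_add_card_compl_le {s : Finset V}
    (hs : ∀ v ∉ s, ∃ u ∈ s, G.Adj u v) :
    #(G.interedges s s) + #sᶜ ≤ G.maxDegree * #s := by
  have hcompl : #sᶜ ≤ #(G.interedges s sᶜ) := by
    refine card_le_card_of_surjOn Prod.snd fun v hv => ?_
    obtain ⟨u, hu, h⟩ := hs v (mem_compl.1 hv)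
    exact ⟨(u, v), G.mk_mem_interedges_iff.2 ⟨hu, hv, h⟩, rfl⟩
  calc #(G.interedges s s) + #sᶜ ≤ #(G.interedges s s ∪ G.interedges s sᶜ) := by
        rw [card_union_of_disjoint (G.interedges_disjoint_right s disjoint_compl_right)]
        omega
    _ ≤ #(G.interedges s univ) :=
        card_le_card <| union_subset (G.interedges_mono subset_rfl (subset_univ _))
          (G.interedges_mono subset_rfl (subset_univ _))
    _ ≤ G.maxDegree * #s := G.card_interedges_le_maxDegree_mul s univ

end SimpleGraph

namespace Matrix

open Submodule

theorem apply_eq_zero_of_mem_span_rows {R m n : Type*} [Semiring R] (A : Matrix m n R)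
    {s : Set m} {j : n} (hA : ∀ i ∈ s, A i j = 0) {x : n → R} (hx : x ∈ span R (A '' s)) :
    x j = 0 := by
  have : span R (A '' s) ≤ LinearMap.ker (LinearMap.proj j : (n → R) →ₗ[R] R) :=
    span_le.2 <| by rintro _ ⟨i, hi, rfl⟩; exact hA i hi
  exact this hx

variable {K V : Type*} [DivisionRing K] {G : SimpleGraph V} [DecidableRel G.Adj]
  {A : Matrix V V K}

/-- `interedges` counts ordered pairs, so the last field says that `B` contains at least
`#B - 1` edges of `G`. -/
structure IsGreedyRowSet (G : SimpleGraph V) [DecidableRel G.Adj] (A : Matrix V V K)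
    (B : Finset V) : Prop where
  nonempty : B.Nonempty
  linearIndepOn : LinearIndepOn K A (B : Set V)
  two_mul_card_le : 2 * #B ≤ #(G.interedges B B) + 2

theorem isGreedyRowSet_singleton {u v : V} (h : A u v ≠ 0) : IsGreedyRowSet G A {u} where
  nonempty := singleton_nonempty u
  linearIndepOn := by
    rw [coe_singleton]
    exact LinearIndepOn.singleton fun hu => h (congrFun hu v)
  two_mul_card_le := by simp

theorem exists_isGreedyRowSet_maximal [Finite V] {u v : V} (h : A u v ≠ 0) :
    ∃ B, IsGreedyRowSet G A B ∧ ∀ B', IsGreedyRowSet G A B' → #B' ≤ #B :=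
  Set.exists_max_image {B | IsGreedyRowSet G A B} card (Set.toFinite _)
    ⟨_, isGreedyRowSet_singleton h⟩

variable [DecidableEq V]

theorem IsGreedyRowSet.insert {B : Finset V} (hB : IsGreedyRowSet G A B) {u w : V} (hu : u ∈ B)
    (hw : w ∉ B) (h : G.Adj u w) (hspan : A w ∉ span K (A '' B)) :
    IsGreedyRowSet G A (insert w B) where
  nonempty := insert_nonempty w B
  linearIndepOn := by
    rw [coe_insert]
    exact hB.linearIndepOn.insert hspan
  two_mul_card_le := by
    have := G.card_interedges_add_two_le_insert hu hw h
    rw [card_insert_of_notMem hw]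
    linarith [hB.two_mul_card_le]

section Maximal

variable {B : Finset V} (hB : IsGreedyRowSet G A B)
  (hmax : ∀ B', IsGreedyRowSet G A B' → #B' ≤ #B)
include hB hmax

theorem IsGreedyRowSet.mem_span_of_adj {u w : V} (hu : u ∈ B) (h : G.Adj u w) :
    A w ∈ span K (A '' B) := by
  by_contra hspan
  by_cases hw : w ∈ B
  · exact hspan (subset_span (Set.mem_image_of_mem A hw))
  · have := hmax _ (hB.insert hu hw h hspan)
    rw [card_insert_of_notMem hw] at this
    omega

theorem IsGreedyRowSet.exists_adj_of_notMem (hA : ∀ u v, A u v ≠ 0 ↔ G.Adj u v)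
    (hG : G.Preconnected) {v : V} (hv : v ∉ B) : ∃ u ∈ B, G.Adj u v := by
  obtain ⟨b, hb⟩ := hB.nonempty
  have hrow {x : V} (hx : x ∈ B ∨ ∃ u ∈ B, G.Adj u x) : A x ∈ span K (A '' B) := by
    rcases hx with hx | ⟨u, hu, h⟩
    · exact subset_span (Set.mem_image_of_mem A hx)
    · exact hB.mem_span_of_adj hmax hu h
  refine (hG.mem_of_adj_closed (S := {x | x ∈ B ∨ ∃ u ∈ B, G.Adj u x}) (Or.inl hb)
    (fun x y hx hxy => ?_)).resolve_left hv
  by_contra hy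
  simp only [Set.mem_ofPred_eq, not_or, not_exists, not_and] at hy
  refine (hA x y).2 hxy (A.apply_eq_zero_of_mem_span_rows (fun u hu => ?_) (hrow hx))
  exact not_not.1 (mt (hA u y).1 (hy.2 u hu))

theorem IsGreedyRowSet.span_eq (hA : ∀ u v, A u v ≠ 0 ↔ G.Adj u v) (hG : G.Preconnected) :
    span K (A '' B) = span K (Set.range A) := by
  refine le_antisymm (span_mono (Set.image_subset_range _ _)) (span_le.2 ?_)
  rintro _ ⟨v, rfl⟩
  by_cases hv : v ∈ B
  · exact subset_span (Set.mem_image_of_mem A hv)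
  · obtain ⟨u, hu, h⟩ := hB.exists_adj_of_notMem hmax hA hG hv
    exact hB.mem_span_of_adj hmax hu h

end Maximal

theorem card_add_two_mul_finrank_span_le [Fintype V] (hA : ∀ u v, A u v ≠ 0 ↔ G.Adj u v)
    (hG : G.Connected) (hΔ : 0 < G.maxDegree) :
    Fintype.card V + 2 * Module.finrank K (span K (Set.range A)) ≤
      (G.maxDegree + 1) * Module.finrank K (span K (Set.range A)) + 2 := by
  have := hG.nonempty
  obtain ⟨u, hu⟩ := G.exists_maximal_degree_vertex
  obtain ⟨v, huv⟩ := (G.degree_pos_iff_exists_adj u).1 (hu ▸ hΔ)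
  obtain ⟨B, hB, hmax⟩ := exists_isGreedyRowSet_maximal (G := G) ((hA u v).2 huv)
  have hrank : Module.finrank K (span K (Set.range A)) = #B := by
    rw [← hB.span_eq hmax hA hG.preconnected, Set.image_eq_range A B,
      finrank_span_eq_card hB.linearIndepOn]
    exact Fintype.card_coe B
  have hcount := G.card_interedges_add_card_compl_le fun _ =>
    hB.exists_adj_of_notMem hmax hA hG.preconnected
  rw [hrank, ← card_add_card_compl B]
  linarith [hB.two_mul_card_le]

end Matrix

theorem QuaternionUnitGainGraph.adjMatrix_ne_zero_iff {V : Type*} (Φ : QuaternionUnitGainGraph V)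
    {u v : V} : Φ.adjMatrix u v ≠ 0 ↔ Φ.G.Adj u v := by
  refine ⟨fun h => by_contra fun hn => h (Φ.gain_zero u v hn), fun h h0 => ?_⟩
  have := Φ.gain_unit u v h
  simp_all [adjMatrix]

theorem QuaternionUnitGainGraph.rank_eq_finrank {V : Type*} (Φ : QuaternionUnitGainGraph V) :
    Φ.rank = Module.finrank (Quaternion ℝ)
      (Submodule.span (Quaternion ℝ) (Set.range Φ.adjMatrix)) :=
  rfl

/-- For a connected quaternion unit gain graph on `n` vertices with maximum degree
`Δ ≥ 2`, the row left rank is at least `(n - 2) / (Δ - 1)`. -/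
theorem gain_connected_rank_ge {V : Type*} [Fintype V] [DecidableEq V]
    (Φ : QuaternionUnitGainGraph V) [DecidableRel Φ.G.Adj]
    (hconn : Φ.G.Connected) (hΔ : 2 ≤ Φ.G.maxDegree) :
    ((Fintype.card V : ℝ) - 2) / ((Φ.G.maxDegree : ℝ) - 1) ≤ (Φ.rank : ℝ) := by
  have key := Matrix.card_add_two_mul_finrank_span_le (fun u v => Φ.adjMatrix_ne_zero_iff)
    hconn (by omega)
  have hΔ' : (2 : ℝ) ≤ Φ.G.maxDegree := by exact_mod_cast hΔ
  rw [Φ.rank_eq_finrank, div_le_iff₀ (by linarith)]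
  have := (Nat.cast_le (α := ℝ)).2 key
  push_cast at this
  linarith
end
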